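/- arXiv:math/0610184 — 3 statements merged into one kernel-verified Lean document; each statement's English description precedes it below -/
import Mathlib

section
/- With the operator J₀ defined by J₀w(φ₀,φ₁) = inf_{t ∈ [0,∞]} ∫₀ᵗ e^{-(λ+μ)u}(g + μ·(w∘S))(x(u,φ₀), y(u,φ₁)) du: if w : ℝ₊² → ℝ is bounded and concave, then J₀w is concave; and if w₁ ≤ w₂ are bounded Borel functions, then J₀w₁ ≤ J₀w₂. -/
/-- The integral `Jw(t, φ₀, φ₁)` of the discounted running cost
`g + μ·(w∘S)` along the deterministic flow `(x(·,φ₀), y(·,φ₁))` up to time `t`. -/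
noncomputable def Jop (l μ c : ℝ) (X Y : ℝ → ℝ → ℝ) (w : ℝ × ℝ → ℝ)
    (t φ0 φ1 : ℝ) : ℝ :=
  ∫ u in (0:ℝ)..t, Real.exp (-(l + μ) * u) *
    ((X u φ0 + Y u φ1 - (l / c) * Real.sqrt 2) +
      μ * w ((1 - 1 / μ) * X u φ0, (1 + 1 / μ) * Y u φ1))

/-- The value `Jw(∞, φ₀, φ₁)` of the same integral over all of `(0,∞)`. -/
noncomputable def Jinfty (l μ c : ℝ) (X Y : ℝ → ℝ → ℝ) (w : ℝ × ℝ → ℝ)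
    (φ0 φ1 : ℝ) : ℝ :=
  ∫ u in Set.Ioi (0:ℝ), Real.exp (-(l + μ) * u) *
    ((X u φ0 + Y u φ1 - (l / c) * Real.sqrt 2) +
      μ * w ((1 - 1 / μ) * X u φ0, (1 + 1 / μ) * Y u φ1))

/-- `J₀w(φ₀,φ₁) = inf_{t ∈ [0,∞]} Jw(t,φ₀,φ₁)`. -/
noncomputable def Jzero (l μ c : ℝ) (X Y : ℝ → ℝ → ℝ) (w : ℝ × ℝ → ℝ)
    (φ0 φ1 : ℝ) : ℝ :=
  sInf (insert (Jinfty l μ c X Y w φ0 φ1)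
    ((fun t => Jop l μ c X Y w t φ0 φ1) '' Set.Ici (0:ℝ)))

open MeasureTheory

set_option maxHeartbeats 1000000

private lemma aux_const {g : ℝ → ℝ} (hg : ∀ t, HasDerivAt g 0 t) (u : ℝ) : g u = g 0 :=
  is_const_of_deriv_eq_zero (fun t => (hg t).differentiableAt) (fun t => (hg t).deriv) u 0

private lemma aux_expderiv (k t : ℝ) :
    HasDerivAt (fun s : ℝ => Real.exp (-(k * s))) (-k * Real.exp (-(k * t))) t := by
  have h1 : HasDerivAt (fun s : ℝ => -(k * s)) (-k) t := by
    simpa using ((hasDerivAt_id t).const_mul k).fun_neg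
  simpa [mul_comm] using h1.exp

private lemma aux_lin_diff {k : ℝ} {D : ℝ → ℝ} (hD : ∀ t, HasDerivAt D (k * D t) t) (u : ℝ) :
    D u = D 0 * Real.exp (k * u) := by
  have hg : ∀ t, HasDerivAt (fun s => D s * Real.exp (-(k * s))) 0 t := by
    intro t
    have h := (hD t).fun_mul (aux_expderiv k t)
    exact h.congr_deriv (by ring)
  have h : D u * Real.exp (-(k * u)) = D 0 * Real.exp (-(k * 0)) := aux_const hg u
  simp only [mul_zero, neg_zero, Real.exp_zero, mul_one] at h
  have he : Real.exp (-(k * u)) * Real.exp (k * u) = 1 := by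
    rw [← Real.exp_add]; simp
  calc D u = D u * Real.exp (-(k * u)) * Real.exp (k * u) := by rw [mul_assoc, he, mul_one]
  _ = D 0 * Real.exp (k * u) := by rw [h]

private lemma aux_lin_rep {k b : ℝ} {Z : ℝ → ℝ} (hZ : ∀ t, HasDerivAt Z (k * Z t + b) t)
    (hZ0 : Z 0 = 0) (u : ℝ) :
    Z u = Real.exp (k * u) * ∫ s in (0:ℝ)..u, b * Real.exp (-(k * s)) := by
  have hg : ∀ t, HasDerivAt (fun s => Z s * Real.exp (-(k * s))) (b * Real.exp (-(k * t))) t := by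
    intro t
    have h := (hZ t).fun_mul (aux_expderiv k t)
    exact h.congr_deriv (by ring)
  have hcont : Continuous fun s : ℝ => b * Real.exp (-(k * s)) := by continuity
  have hFTC := intervalIntegral.integral_eq_sub_of_hasDerivAt
      (f := fun s => Z s * Real.exp (-(k * s))) (f' := fun s => b * Real.exp (-(k * s)))
      (fun t _ => hg t) (hcont.intervalIntegrable 0 u)
  rw [hFTC]
  simp only [hZ0, zero_mul, sub_zero]
  rw [show Real.exp (k * u) * (Z u * Real.exp (-(k * u)))
      = Z u * (Real.exp (k * u) * Real.exp (-(k * u))) from by ring, ← Real.exp_add]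
  simp

private lemma aux_rep_nonneg {k b u : ℝ} (hb : 0 ≤ b) (hu : 0 ≤ u) :
    0 ≤ Real.exp (k * u) * ∫ s in (0:ℝ)..u, b * Real.exp (-(k * s)) := by
  apply mul_nonneg (Real.exp_pos _).le
  apply intervalIntegral.integral_nonneg hu
  intro s _
  positivity

private lemma aux_rep_pos {k b u : ℝ} (hb : 0 < b) (hu : 0 < u) :
    0 < Real.exp (k * u) * ∫ s in (0:ℝ)..u, b * Real.exp (-(k * s)) := by
  apply mul_pos (Real.exp_pos _)
  apply intervalIntegral.intervalIntegral_pos_of_pos_on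
  · exact (by continuity : Continuous fun s : ℝ => b * Real.exp (-(k * s))).intervalIntegrable 0 u
  · intro s _
    positivity
  · exact hu

private lemma aux_rep_bound {k K b u : ℝ} (hb : 0 ≤ b) (hkK : k ≤ K) (hK : 0 ≤ K) (hu : 0 ≤ u) :
    |Real.exp (k * u) * ∫ s in (0:ℝ)..u, b * Real.exp (-(k * s))|
      ≤ 2 * b * u * Real.exp (K * u) := by
  have hC : ∀ s ∈ Set.uIoc (0:ℝ) u, ‖b * Real.exp (-(k * s))‖
      ≤ b * (1 + Real.exp (-(k * u))) := by
    intro s hs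
    rw [Set.uIoc_of_le hu] at hs
    rw [Real.norm_eq_abs, abs_mul, abs_of_nonneg hb, abs_of_pos (Real.exp_pos _)]
    apply mul_le_mul_of_nonneg_left _ hb
    rcases le_or_gt k 0 with h | h
    · have h1 : -(k * s) ≤ -(k * u) := by nlinarith [hs.1.le, hs.2]
      have h2 := Real.exp_le_exp.mpr h1
      linarith
    · have h1 : -(k * s) ≤ 0 := by nlinarith [hs.1.le]
      have h2 : Real.exp (-(k * s)) ≤ 1 := Real.exp_le_one_iff.mpr h1
      linarith [Real.exp_pos (-(k * u))]
  have hI := intervalIntegral.norm_integral_le_of_norm_le_const hC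
  rw [Real.norm_eq_abs] at hI
  rw [abs_mul, abs_of_pos (Real.exp_pos _)]
  have h4 : |u - 0| = u := by rw [sub_zero, abs_of_nonneg hu]
  rw [h4] at hI
  have h1 : Real.exp (k * u) ≤ Real.exp (K * u) := Real.exp_le_exp.mpr (by nlinarith)
  have h2 : (1:ℝ) ≤ Real.exp (K * u) := Real.one_le_exp (by positivity)
  have h3 : Real.exp (k * u) * Real.exp (-(k * u)) = 1 := by rw [← Real.exp_add]; simp
  have h5 := mul_le_mul_of_nonneg_left hI (Real.exp_pos (k * u)).le
  have hbu : 0 ≤ b * u := mul_nonneg hb hu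
  nlinarith [abs_nonneg (∫ s in (0:ℝ)..u, b * Real.exp (-(k * s))), Real.exp_pos (k * u),
    mul_le_mul_of_nonneg_left h1 hbu, mul_le_mul_of_nonneg_left h2 hbu]

/-- `J₀` preserves concavity of bounded functions on `ℝ₊²`,
and it is monotone: `w₁ ≤ w₂ ⟹ J₀w₁ ≤ J₀w₂`. -/
theorem stmt6 (l μ c m : ℝ) (hl : 0 < l) (hc : 0 < c) (hμ : 1 < μ)
    (hm1 : -1 < m) (hm2 : m < 1)
    (X Y : ℝ → ℝ → ℝ)
    (hX0 : ∀ φ, X 0 φ = φ)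
    (hX : ∀ φ t, HasDerivAt (fun s => X s φ)
      ((l + 1) * X t φ + l * (1 - m) / Real.sqrt 2) t)
    (hY0 : ∀ φ, Y 0 φ = φ)
    (hY : ∀ φ t, HasDerivAt (fun s => Y s φ)
      ((l - 1) * Y t φ + l * (1 + m) / Real.sqrt 2) t) :
    (∀ w : ℝ × ℝ → ℝ, (∃ M, ∀ p, |w p| ≤ M) →
        ConcaveOn ℝ {p : ℝ × ℝ | 0 ≤ p.1 ∧ 0 ≤ p.2} w →
        ConcaveOn ℝ {p : ℝ × ℝ | 0 ≤ p.1 ∧ 0 ≤ p.2}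
          (fun p => Jzero l μ c X Y w p.1 p.2)) ∧
    (∀ w1 w2 : ℝ × ℝ → ℝ, (∃ M, ∀ p, |w1 p| ≤ M) → (∃ M, ∀ p, |w2 p| ≤ M) →
        Measurable w1 → Measurable w2 → (∀ p, w1 p ≤ w2 p) →
        ∀ φ0 φ1 : ℝ, 0 ≤ φ0 → 0 ≤ φ1 →
          Jzero l μ c X Y w1 φ0 φ1 ≤ Jzero l μ c X Y w2 φ0 φ1) := by
  have hs2 : (0:ℝ) < Real.sqrt 2 := Real.sqrt_pos.mpr (by norm_num)
  have hμ0 : (0:ℝ) < μ := by linarith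
  have hε : (0:ℝ) < (μ - 1) / 2 := by linarith
  have hbX : 0 < l * (1 - m) / Real.sqrt 2 := div_pos (mul_pos hl (by linarith)) hs2
  have hbY : 0 < l * (1 + m) / Real.sqrt 2 := div_pos (mul_pos hl (by linarith)) hs2
  -- the flows are affine in the initial condition
  have hXaff : ∀ u φ, X u φ = φ * Real.exp ((l + 1) * u) + X u 0 := by
    intro u φ
    have hD : ∀ t, HasDerivAt (fun s => X s φ - X s 0) ((l + 1) * (X t φ - X t 0)) t := by
      intro t
      have h := (hX φ t).fun_sub (hX 0 t)
      exact h.congr_deriv (by ring)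
    have h := aux_lin_diff hD u
    simp only [hX0] at h
    simp only [sub_zero] at h
    linarith [h]
  have hYaff : ∀ u φ, Y u φ = φ * Real.exp ((l - 1) * u) + Y u 0 := by
    intro u φ
    have hD : ∀ t, HasDerivAt (fun s => Y s φ - Y s 0) ((l - 1) * (Y t φ - Y t 0)) t := by
      intro t
      have h := (hY φ t).fun_sub (hY 0 t)
      exact h.congr_deriv (by ring)
    have h := aux_lin_diff hD u
    simp only [hY0] at h
    simp only [sub_zero] at h
    linarith [h]
  -- explicit representation of the inhomogeneous part
  have hXrep : ∀ u, X u 0 = Real.exp ((l + 1) * u) *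
      ∫ s in (0:ℝ)..u, (l * (1 - m) / Real.sqrt 2) * Real.exp (-((l + 1) * s)) :=
    fun u => aux_lin_rep (fun t => hX 0 t) (hX0 0) u
  have hYrep : ∀ u, Y u 0 = Real.exp ((l - 1) * u) *
      ∫ s in (0:ℝ)..u, (l * (1 + m) / Real.sqrt 2) * Real.exp (-((l - 1) * s)) :=
    fun u => aux_lin_rep (fun t => hY 0 t) (hY0 0) u
  have hXnn : ∀ u, 0 ≤ u → ∀ φ, 0 ≤ φ → 0 ≤ X u φ := by
    intro u hu φ hφ
    rw [hXaff u φ]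
    have h1 := hXrep u ▸ aux_rep_nonneg (k := l + 1) hbX.le hu
    positivity
  have hYnn : ∀ u, 0 ≤ u → ∀ φ, 0 ≤ φ → 0 ≤ Y u φ := by
    intro u hu φ hφ
    rw [hYaff u φ]
    have h1 := hYrep u ▸ aux_rep_nonneg (k := l - 1) hbY.le hu
    positivity
  have hXpos : ∀ u, 0 < u → ∀ φ, 0 ≤ φ → 0 < X u φ := by
    intro u hu φ hφ
    rw [hXaff u φ]
    have h1 := hXrep u ▸ aux_rep_pos (k := l + 1) hbX hu
    positivity
  have hYpos : ∀ u, 0 < u → ∀ φ, 0 ≤ φ → 0 < Y u φ := by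
    intro u hu φ hφ
    rw [hYaff u φ]
    have h1 := hYrep u ▸ aux_rep_pos (k := l - 1) hbY hu
    positivity
  have hX0bd : ∀ u, 0 ≤ u → |X u 0|
      ≤ 2 * (l * (1 - m) / Real.sqrt 2) * u * Real.exp ((l + 1) * u) := by
    intro u hu
    rw [hXrep u]
    exact aux_rep_bound hbX.le le_rfl (by linarith) hu
  have hY0bd : ∀ u, 0 ≤ u → |Y u 0|
      ≤ 2 * (l * (1 + m) / Real.sqrt 2) * u * Real.exp ((l + 1) * u) := by
    intro u hu
    rw [hYrep u]
    exact aux_rep_bound hbY.le (by linarith) (by linarith) hu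
  have hXcont : ∀ φ, Continuous fun u => X u φ := by
    intro φ
    exact Differentiable.continuous (fun t => (hX φ t).differentiableAt)
  have hYcont : ∀ φ, Continuous fun u => Y u φ := by
    intro φ
    exact Differentiable.continuous (fun t => (hY φ t).differentiableAt)
  -- the integrand
  set F : (ℝ × ℝ → ℝ) → ℝ → ℝ → ℝ → ℝ := fun w φ0 φ1 u =>
    Real.exp (-(l + μ) * u) * ((X u φ0 + Y u φ1 - (l / c) * Real.sqrt 2) +
      μ * w ((1 - 1 / μ) * X u φ0, (1 + 1 / μ) * Y u φ1)) with hFdef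
  have hJop : ∀ w t φ0 φ1, Jop l μ c X Y w t φ0 φ1 = ∫ u in (0:ℝ)..t, F w φ0 φ1 u := by
    intro w t φ0 φ1
    rw [hFdef]
    rfl
  have hJinf : ∀ w φ0 φ1, Jinfty l μ c X Y w φ0 φ1 = ∫ u in Set.Ioi (0:ℝ), F w φ0 φ1 u := by
    intro w φ0 φ1
    rw [hFdef]
    rfl
  set Cb : ℝ → ℝ → ℝ → ℝ := fun M φ0 φ1 => |φ0| + |φ1| + (l / c) * Real.sqrt 2 + μ * M +
    (2 * (l * (1 - m) / Real.sqrt 2) + 2 * (l * (1 + m) / Real.sqrt 2)) * (2 / (μ - 1))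
    with hCbdef
  -- the uniform exponential bound on the integrand
  have hFbd : ∀ (w : ℝ × ℝ → ℝ) (M : ℝ), 0 ≤ M → (∀ p, |w p| ≤ M) → ∀ φ0 φ1 u, 0 ≤ u →
      |F w φ0 φ1 u| ≤ Cb M φ0 φ1 * Real.exp (-((μ - 1) / 2) * u) := by
    intro w M hM hw φ0 φ1 u hu
    have hE1 : (1:ℝ) ≤ Real.exp ((l + 1) * u) := Real.one_le_exp (by positivity)
    have haX : |X u φ0| ≤ (|φ0| + 2 * (l * (1 - m) / Real.sqrt 2) * u)
        * Real.exp ((l + 1) * u) := by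
      rw [hXaff u φ0]
      calc |φ0 * Real.exp ((l + 1) * u) + X u 0|
          ≤ |φ0 * Real.exp ((l + 1) * u)| + |X u 0| := abs_add_le _ _
        _ ≤ |φ0| * Real.exp ((l + 1) * u)
            + 2 * (l * (1 - m) / Real.sqrt 2) * u * Real.exp ((l + 1) * u) := by
            rw [abs_mul, abs_of_pos (Real.exp_pos _)]
            linarith [hX0bd u hu]
        _ = _ := by ring
    have haY : |Y u φ1| ≤ (|φ1| + 2 * (l * (1 + m) / Real.sqrt 2) * u)
        * Real.exp ((l + 1) * u) := by
      rw [hYaff u φ1]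
      have hmono : Real.exp ((l - 1) * u) ≤ Real.exp ((l + 1) * u) :=
        Real.exp_le_exp.mpr (by nlinarith)
      calc |φ1 * Real.exp ((l - 1) * u) + Y u 0|
          ≤ |φ1 * Real.exp ((l - 1) * u)| + |Y u 0| := abs_add_le _ _
        _ ≤ |φ1| * Real.exp ((l + 1) * u)
            + 2 * (l * (1 + m) / Real.sqrt 2) * u * Real.exp ((l + 1) * u) := by
            rw [abs_mul, abs_of_pos (Real.exp_pos _)]
            have := mul_le_mul_of_nonneg_left hmono (abs_nonneg φ1)
            linarith [hY0bd u hu]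
        _ = _ := by ring
    have hC0 : (0:ℝ) ≤ (l / c) * Real.sqrt 2 := by positivity
    have t1 : |(X u φ0 + Y u φ1 - (l / c) * Real.sqrt 2) +
        μ * w ((1 - 1 / μ) * X u φ0, (1 + 1 / μ) * Y u φ1)|
        ≤ |X u φ0| + |Y u φ1| + (l / c) * Real.sqrt 2 + μ * M := by
      have h1 := abs_add_le (X u φ0 + Y u φ1 - (l / c) * Real.sqrt 2)
        (μ * w ((1 - 1 / μ) * X u φ0, (1 + 1 / μ) * Y u φ1))
      have h2 := abs_sub (X u φ0 + Y u φ1) ((l / c) * Real.sqrt 2)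
      have h3 := abs_add_le (X u φ0) (Y u φ1)
      have h4 : |μ * w ((1 - 1 / μ) * X u φ0, (1 + 1 / μ) * Y u φ1)| ≤ μ * M := by
        rw [abs_mul, abs_of_pos hμ0]
        exact mul_le_mul_of_nonneg_left (hw _) hμ0.le
      have h5 : |(l / c) * Real.sqrt 2| = (l / c) * Real.sqrt 2 := abs_of_nonneg hC0
      linarith
    have hc0M : (l / c) * Real.sqrt 2 + μ * M
        ≤ ((l / c) * Real.sqrt 2 + μ * M) * Real.exp ((l + 1) * u) := by
      nlinarith [mul_nonneg hμ0.le hM]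
    have hED : Real.exp (-(l + μ) * u) * Real.exp ((l + 1) * u)
        = Real.exp (-((μ - 1) / 2) * u) * Real.exp (-((μ - 1) / 2) * u) := by
      rw [← Real.exp_add, ← Real.exp_add]
      ring_nf
    have hee : Real.exp (-((μ - 1) / 2) * u) ≤ 1 := Real.exp_le_one_iff.mpr (by nlinarith)
    have huee : u * Real.exp (-((μ - 1) / 2) * u) ≤ 2 / (μ - 1) := by
      have h1 : ((μ - 1) / 2) * u ≤ Real.exp (((μ - 1) / 2) * u) := by
        nlinarith [Real.add_one_le_exp (((μ - 1) / 2) * u)]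
      have h2 : Real.exp (((μ - 1) / 2) * u) * Real.exp (-((μ - 1) / 2) * u) = 1 := by
        rw [← Real.exp_add]
        ring_nf
        exact Real.exp_zero
      rw [le_div_iff₀ (by linarith : (0:ℝ) < μ - 1)]
      nlinarith [mul_le_mul_of_nonneg_right h1 (Real.exp_pos (-((μ - 1) / 2) * u)).le]
    have hA0 : (0:ℝ) ≤ |φ0| + |φ1| + (l / c) * Real.sqrt 2 + μ * M := by positivity
    have hB0 : (0:ℝ) ≤ 2 * (l * (1 - m) / Real.sqrt 2) + 2 * (l * (1 + m) / Real.sqrt 2) := by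
      positivity
    calc |F w φ0 φ1 u|
        = Real.exp (-(l + μ) * u) * |(X u φ0 + Y u φ1 - (l / c) * Real.sqrt 2) +
            μ * w ((1 - 1 / μ) * X u φ0, (1 + 1 / μ) * Y u φ1)| := by
          rw [hFdef]
          rw [abs_mul, abs_of_pos (Real.exp_pos _)]
      _ ≤ Real.exp (-(l + μ) * u) *
          ((|φ0| + 2 * (l * (1 - m) / Real.sqrt 2) * u) * Real.exp ((l + 1) * u)
            + (|φ1| + 2 * (l * (1 + m) / Real.sqrt 2) * u) * Real.exp ((l + 1) * u)
            + ((l / c) * Real.sqrt 2 + μ * M) * Real.exp ((l + 1) * u)) := by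
          apply mul_le_mul_of_nonneg_left _ (Real.exp_pos _).le
          linarith
      _ = (|φ0| + |φ1| + (l / c) * Real.sqrt 2 + μ * M +
            (2 * (l * (1 - m) / Real.sqrt 2) + 2 * (l * (1 + m) / Real.sqrt 2)) * u) *
            (Real.exp (-(l + μ) * u) * Real.exp ((l + 1) * u)) := by ring
      _ = ((|φ0| + |φ1| + (l / c) * Real.sqrt 2 + μ * M) * Real.exp (-((μ - 1) / 2) * u) +
            (2 * (l * (1 - m) / Real.sqrt 2) + 2 * (l * (1 + m) / Real.sqrt 2)) *
            (u * Real.exp (-((μ - 1) / 2) * u))) * Real.exp (-((μ - 1) / 2) * u) := by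
          rw [hED]
          ring
      _ ≤ Cb M φ0 φ1 * Real.exp (-((μ - 1) / 2) * u) := by
          apply mul_le_mul_of_nonneg_right _ (Real.exp_pos _).le
          rw [hCbdef]
          have hA := mul_le_mul_of_nonneg_left hee hA0
          have hB := mul_le_mul_of_nonneg_left huee hB0
          linarith
  -- integrability of the dominating function
  have hdomint : ∀ M φ0 φ1, IntegrableOn
      (fun u => Cb M φ0 φ1 * Real.exp (-((μ - 1) / 2) * u)) (Set.Ioi (0:ℝ)) :=
    fun M φ0 φ1 => (exp_neg_integrableOn_Ioi 0 hε).const_mul _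
  -- integrability of the integrand on (0,∞)
  have hFint : ∀ (w : ℝ × ℝ → ℝ) (M : ℝ) (φ0 φ1 : ℝ), 0 ≤ M → (∀ p, |w p| ≤ M) →
      AEStronglyMeasurable (F w φ0 φ1) (volume.restrict (Set.Ioi (0:ℝ))) →
      IntegrableOn (F w φ0 φ1) (Set.Ioi (0:ℝ)) := by
    intro w M φ0 φ1 hM hw hmeas
    apply Integrable.mono' (hdomint M φ0 φ1) hmeas
    filter_upwards [ae_restrict_mem measurableSet_Ioi] with u hu
    rw [Real.norm_eq_abs]
    exact hFbd w M hM hw φ0 φ1 u (le_of_lt hu)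
  have hFintt : ∀ (w : ℝ × ℝ → ℝ) (M : ℝ) (φ0 φ1 : ℝ), 0 ≤ M → (∀ p, |w p| ≤ M) →
      AEStronglyMeasurable (F w φ0 φ1) (volume.restrict (Set.Ioi (0:ℝ))) →
      ∀ t, 0 ≤ t → IntervalIntegrable (F w φ0 φ1) volume 0 t := by
    intro w M φ0 φ1 hM hw hmeas t ht
    rw [intervalIntegrable_iff_integrableOn_Ioc_of_le ht]
    exact (hFint w M φ0 φ1 hM hw hmeas).mono_set Set.Ioc_subset_Ioi_self
  -- measurability of the integrand : measurable case
  have hpathc : ∀ φ0 φ1 : ℝ, Continuous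
      (fun u => ((1 - 1 / μ) * X u φ0, (1 + 1 / μ) * Y u φ1)) := by
    intro φ0 φ1
    exact (continuous_const.mul (hXcont φ0)).prodMk (continuous_const.mul (hYcont φ1))
  have hFmeas : ∀ (w : ℝ × ℝ → ℝ), Measurable w → ∀ φ0 φ1 : ℝ,
      AEStronglyMeasurable (F w φ0 φ1) (volume.restrict (Set.Ioi (0:ℝ))) := by
    intro w hw φ0 φ1
    apply Measurable.aestronglyMeasurable
    rw [hFdef]
    apply Measurable.mul
    · exact (Real.continuous_exp.comp (continuous_const.mul continuous_id)).measurable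
    · apply Measurable.add
      · exact (((hXcont φ0).add (hYcont φ1)).sub continuous_const).measurable
      · exact measurable_const.mul (hw.comp (hpathc φ0 φ1).measurable)
  -- measurability of the integrand : concave case
  have hFconc : ∀ (w : ℝ × ℝ → ℝ), ConcaveOn ℝ {p : ℝ × ℝ | 0 ≤ p.1 ∧ 0 ≤ p.2} w →
      ∀ φ0 φ1 : ℝ, 0 ≤ φ0 → 0 ≤ φ1 →
      AEStronglyMeasurable (F w φ0 φ1) (volume.restrict (Set.Ioi (0:ℝ))) := by
    intro w hwc φ0 φ1 h0 h1
    have hμ1 : (0:ℝ) < 1 - 1 / μ := by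
      have : 1 / μ < 1 := by rw [div_lt_one hμ0]; linarith
      linarith
    have hμ2 : (0:ℝ) < 1 + 1 / μ := by positivity
    have hO : IsOpen {p : ℝ × ℝ | 0 < p.1 ∧ 0 < p.2} :=
      (isOpen_lt continuous_const continuous_fst).inter
        (isOpen_lt continuous_const continuous_snd)
    have hOint : {p : ℝ × ℝ | 0 < p.1 ∧ 0 < p.2}
        ⊆ interior {p : ℝ × ℝ | 0 ≤ p.1 ∧ 0 ≤ p.2} :=
      interior_maximal (fun p hp => ⟨hp.1.le, hp.2.le⟩) hO
    have hwcont : ContinuousOn w {p : ℝ × ℝ | 0 < p.1 ∧ 0 < p.2} :=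
      hwc.continuousOn_interior.mono hOint
    have hmaps : Set.MapsTo (fun u => ((1 - 1 / μ) * X u φ0, (1 + 1 / μ) * Y u φ1))
        (Set.Ioi (0:ℝ)) {p : ℝ × ℝ | 0 < p.1 ∧ 0 < p.2} := by
      intro u hu
      exact ⟨mul_pos hμ1 (hXpos u hu φ0 h0), mul_pos hμ2 (hYpos u hu φ1 h1)⟩
    have hcont : ContinuousOn (F w φ0 φ1) (Set.Ioi (0:ℝ)) := by
      rw [hFdef]
      apply ContinuousOn.mul
        ((Real.continuous_exp.comp (continuous_const.mul continuous_id)).continuousOn)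
      apply ContinuousOn.add
        ((((hXcont φ0).add (hYcont φ1)).sub continuous_const).continuousOn)
      exact continuous_const.continuousOn.mul
        (hwcont.comp (hpathc φ0 φ1).continuousOn hmaps)
    exact hcont.aestronglyMeasurable measurableSet_Ioi
  -- every element of the infimum set is bounded in absolute value
  have hmembd : ∀ (w : ℝ × ℝ → ℝ) (M : ℝ) (φ0 φ1 : ℝ), 0 ≤ M → (∀ p, |w p| ≤ M) →
      AEStronglyMeasurable (F w φ0 φ1) (volume.restrict (Set.Ioi (0:ℝ))) →
      ∀ v ∈ insert (Jinfty l μ c X Y w φ0 φ1)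
        ((fun t => Jop l μ c X Y w t φ0 φ1) '' Set.Ici (0:ℝ)),
      |v| ≤ ∫ u in Set.Ioi (0:ℝ), Cb M φ0 φ1 * Real.exp (-((μ - 1) / 2) * u) := by
    intro w M φ0 φ1 hM hw hmeas v hv
    have hCb0 : 0 ≤ Cb M φ0 φ1 := by
      rw [hCbdef]
      have h1 : (0:ℝ) ≤ (l / c) * Real.sqrt 2 := by positivity
      have h2 : (0:ℝ) ≤ μ * M := mul_nonneg hμ0.le hM
      have h3 : (0:ℝ) ≤ (2 * (l * (1 - m) / Real.sqrt 2) + 2 * (l * (1 + m) / Real.sqrt 2))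
          * (2 / (μ - 1)) := by
        apply mul_nonneg (by linarith)
        exact le_of_lt (div_pos two_pos (by linarith))
      have h4 := abs_nonneg φ0
      have h5 := abs_nonneg φ1
      simp only
      linarith
    have hbnd : ∀ᵐ u ∂(volume.restrict (Set.Ioi (0:ℝ))), ‖F w φ0 φ1 u‖
        ≤ Cb M φ0 φ1 * Real.exp (-((μ - 1) / 2) * u) := by
      filter_upwards [ae_restrict_mem measurableSet_Ioi] with u hu
      rw [Real.norm_eq_abs]
      exact hFbd w M hM hw φ0 φ1 u (le_of_lt hu)
    rcases hv with rfl | ⟨t, ht, rfl⟩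
    · rw [hJinf, ← Real.norm_eq_abs]
      exact norm_integral_le_of_norm_le (hdomint M φ0 φ1) hbnd
    · beta_reduce
      rw [hJop, intervalIntegral.integral_of_le (Set.mem_Ici.mp ht), ← Real.norm_eq_abs]
      have h1 : ‖∫ u in Set.Ioc (0:ℝ) t, F w φ0 φ1 u‖
          ≤ ∫ u in Set.Ioc (0:ℝ) t, Cb M φ0 φ1 * Real.exp (-((μ - 1) / 2) * u) := by
        apply norm_integral_le_of_norm_le
          ((hdomint M φ0 φ1).mono_set Set.Ioc_subset_Ioi_self)
        filter_upwards [ae_restrict_mem measurableSet_Ioc] with u hu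
        rw [Real.norm_eq_abs]
        exact hFbd w M hM hw φ0 φ1 u (le_of_lt hu.1)
      refine h1.trans (setIntegral_mono_set (hdomint M φ0 φ1) ?_ ?_)
      · exact Filter.Eventually.of_forall fun u => mul_nonneg hCb0 (Real.exp_pos _).le
      · exact HasSubset.Subset.eventuallyLE Set.Ioc_subset_Ioi_self
  have hnonempty : ∀ (w : ℝ × ℝ → ℝ) (φ0 φ1 : ℝ),
      (insert (Jinfty l μ c X Y w φ0 φ1)
        ((fun t => Jop l μ c X Y w t φ0 φ1) '' Set.Ici (0:ℝ))).Nonempty :=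
    fun w φ0 φ1 => Set.insert_nonempty _ _
  constructor
  · -- concavity preservation
    rintro w ⟨M0, hwb0⟩ hwc
    set M : ℝ := max M0 0 with hMdef
    have hM : (0:ℝ) ≤ M := le_max_right _ _
    have hwb : ∀ p, |w p| ≤ M := fun p => (hwb0 p).trans (le_max_left _ _)
    refine ⟨hwc.1, ?_⟩
    rintro p hp q hq a b ha hb hab
    simp only [smul_eq_mul, Prod.smul_fst, Prod.smul_snd, Prod.fst_add, Prod.snd_add]
    have hr1 : 0 ≤ a * p.1 + b * q.1 := by
      have := hp.1; have := hq.1; positivity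
    have hr2 : 0 ≤ a * p.2 + b * q.2 := by
      have := hp.2; have := hq.2; positivity
    -- measurability/integrability for the three points
    have hmp := hFconc w hwc p.1 p.2 hp.1 hp.2
    have hmq := hFconc w hwc q.1 q.2 hq.1 hq.2
    have hmr := hFconc w hwc _ _ hr1 hr2
    have hip := hFint w M p.1 p.2 hM hwb hmp
    have hiq := hFint w M q.1 q.2 hM hwb hmq
    have hir := hFint w M _ _ hM hwb hmr
    -- pointwise concavity of the integrand
    have hkey : ∀ u, 0 ≤ u → a * F w p.1 p.2 u + b * F w q.1 q.2 u
        ≤ F w (a * p.1 + b * q.1) (a * p.2 + b * q.2) u := by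
      intro u hu
      have hxa : X u (a * p.1 + b * q.1) = a * X u p.1 + b * X u q.1 := by
        rw [hXaff u (a * p.1 + b * q.1), hXaff u p.1, hXaff u q.1]
        linear_combination (X u 0) * hab.symm
      have hya : Y u (a * p.2 + b * q.2) = a * Y u p.2 + b * Y u q.2 := by
        rw [hYaff u (a * p.2 + b * q.2), hYaff u p.2, hYaff u q.2]
        linear_combination (Y u 0) * hab.symm
      have hμ1 : (0:ℝ) ≤ 1 - 1 / μ := by
        have : 1 / μ ≤ 1 := by rw [div_le_one hμ0]; linarith
        linarith
      have hμ2 : (0:ℝ) ≤ 1 + 1 / μ := by positivity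
      have hPmem : ((1 - 1 / μ) * X u p.1, (1 + 1 / μ) * Y u p.2)
          ∈ {p : ℝ × ℝ | 0 ≤ p.1 ∧ 0 ≤ p.2} :=
        ⟨mul_nonneg hμ1 (hXnn u hu p.1 hp.1), mul_nonneg hμ2 (hYnn u hu p.2 hp.2)⟩
      have hQmem : ((1 - 1 / μ) * X u q.1, (1 + 1 / μ) * Y u q.2)
          ∈ {p : ℝ × ℝ | 0 ≤ p.1 ∧ 0 ≤ p.2} :=
        ⟨mul_nonneg hμ1 (hXnn u hu q.1 hq.1), mul_nonneg hμ2 (hYnn u hu q.2 hq.2)⟩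
      have hwle : a * w ((1 - 1 / μ) * X u p.1, (1 + 1 / μ) * Y u p.2)
          + b * w ((1 - 1 / μ) * X u q.1, (1 + 1 / μ) * Y u q.2)
          ≤ w ((1 - 1 / μ) * X u (a * p.1 + b * q.1),
              (1 + 1 / μ) * Y u (a * p.2 + b * q.2)) := by
        have h2 := hwc.2 hPmem hQmem ha hb hab
        have harg : ((1 - 1 / μ) * X u (a * p.1 + b * q.1),
            (1 + 1 / μ) * Y u (a * p.2 + b * q.2))
            = a • ((1 - 1 / μ) * X u p.1, (1 + 1 / μ) * Y u p.2)
              + b • ((1 - 1 / μ) * X u q.1, (1 + 1 / μ) * Y u q.2) := by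
          rw [hxa, hya]
          simp only [Prod.smul_mk, Prod.mk_add_mk, smul_eq_mul, Prod.mk.injEq]
          constructor <;> ring
        rw [harg]
        simpa [smul_eq_mul] using h2
      rw [hFdef]
      simp only
      set wp := w ((1 - 1 / μ) * X u p.1, (1 + 1 / μ) * Y u p.2) with hwp
      set wq := w ((1 - 1 / μ) * X u q.1, (1 + 1 / μ) * Y u q.2) with hwq
      set wr := w ((1 - 1 / μ) * X u (a * p.1 + b * q.1),
        (1 + 1 / μ) * Y u (a * p.2 + b * q.2)) with hwr
      rw [hxa, hya]
      have hLHS : a * (Real.exp (-(l + μ) * u) *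
            ((X u p.1 + Y u p.2 - (l / c) * Real.sqrt 2) + μ * wp))
          + b * (Real.exp (-(l + μ) * u) *
            ((X u q.1 + Y u q.2 - (l / c) * Real.sqrt 2) + μ * wq))
          = Real.exp (-(l + μ) * u) *
            (((a * X u p.1 + b * X u q.1) + (a * Y u p.2 + b * Y u q.2)
              - (l / c) * Real.sqrt 2) + μ * (a * wp + b * wq)) := by
        linear_combination (-(Real.exp (-(l + μ) * u) * ((l / c) * Real.sqrt 2))) * hab
      rw [hLHS]
      apply mul_le_mul_of_nonneg_left _ (Real.exp_pos _).le
      nlinarith [hwle]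
    -- integral concavity for each element of the infimum set
    have hJopconc : ∀ t, 0 ≤ t →
        a * Jop l μ c X Y w t p.1 p.2 + b * Jop l μ c X Y w t q.1 q.2
          ≤ Jop l μ c X Y w t (a * p.1 + b * q.1) (a * p.2 + b * q.2) := by
      intro t ht
      have hitp := hFintt w M p.1 p.2 hM hwb hmp t ht
      have hitq := hFintt w M q.1 q.2 hM hwb hmq t ht
      have hitr := hFintt w M _ _ hM hwb hmr t ht
      rw [hJop, hJop, hJop]
      rw [← intervalIntegral.integral_const_mul, ← intervalIntegral.integral_const_mul,
        ← intervalIntegral.integral_add (hitp.const_mul a) (hitq.const_mul b)]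
      exact intervalIntegral.integral_mono_on ht
        ((hitp.const_mul a).add (hitq.const_mul b)) hitr (fun u hu => hkey u hu.1)
    have hJinfconc :
        a * Jinfty l μ c X Y w p.1 p.2 + b * Jinfty l μ c X Y w q.1 q.2
          ≤ Jinfty l μ c X Y w (a * p.1 + b * q.1) (a * p.2 + b * q.2) := by
      rw [hJinf, hJinf, hJinf]
      rw [← integral_const_mul, ← integral_const_mul,
        ← integral_add (hip.const_mul a) (hiq.const_mul b)]
      exact setIntegral_mono_on ((hip.const_mul a).add (hiq.const_mul b)) hir
        measurableSet_Ioi (fun u hu => hkey u (le_of_lt hu))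
    -- now compare the infima
    have hbddp : BddBelow (insert (Jinfty l μ c X Y w p.1 p.2)
        ((fun t => Jop l μ c X Y w t p.1 p.2) '' Set.Ici (0:ℝ))) := by
      refine ⟨-(∫ u in Set.Ioi (0:ℝ), Cb M p.1 p.2 * Real.exp (-((μ - 1) / 2) * u)), ?_⟩
      intro v hv
      exact neg_le_of_abs_le (hmembd w M p.1 p.2 hM hwb hmp v hv)
    have hbddq : BddBelow (insert (Jinfty l μ c X Y w q.1 q.2)
        ((fun t => Jop l μ c X Y w t q.1 q.2) '' Set.Ici (0:ℝ))) := by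
      refine ⟨-(∫ u in Set.Ioi (0:ℝ), Cb M q.1 q.2 * Real.exp (-((μ - 1) / 2) * u)), ?_⟩
      intro v hv
      exact neg_le_of_abs_le (hmembd w M q.1 q.2 hM hwb hmq v hv)
    show a * Jzero l μ c X Y w p.1 p.2 + b * Jzero l μ c X Y w q.1 q.2
      ≤ Jzero l μ c X Y w (a * p.1 + b * q.1) (a * p.2 + b * q.2)
    rw [show Jzero l μ c X Y w (a * p.1 + b * q.1) (a * p.2 + b * q.2)
      = sInf (insert (Jinfty l μ c X Y w (a * p.1 + b * q.1) (a * p.2 + b * q.2))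
        ((fun t => Jop l μ c X Y w t (a * p.1 + b * q.1) (a * p.2 + b * q.2))
          '' Set.Ici (0:ℝ))) from rfl]
    apply le_csInf (hnonempty w _ _)
    rintro v (rfl | ⟨t, ht, rfl⟩)
    · refine le_trans ?_ hJinfconc
      have h1 : Jzero l μ c X Y w p.1 p.2 ≤ Jinfty l μ c X Y w p.1 p.2 :=
        csInf_le hbddp (Set.mem_insert _ _)
      have h2 : Jzero l μ c X Y w q.1 q.2 ≤ Jinfty l μ c X Y w q.1 q.2 :=
        csInf_le hbddq (Set.mem_insert _ _)
      have := mul_le_mul_of_nonneg_left h1 ha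
      have := mul_le_mul_of_nonneg_left h2 hb
      linarith
    · beta_reduce
      refine le_trans ?_ (hJopconc t (Set.mem_Ici.mp ht))
      have h1 : Jzero l μ c X Y w p.1 p.2 ≤ Jop l μ c X Y w t p.1 p.2 :=
        csInf_le hbddp (Set.mem_insert_of_mem _ ⟨t, ht, rfl⟩)
      have h2 : Jzero l μ c X Y w q.1 q.2 ≤ Jop l μ c X Y w t q.1 q.2 :=
        csInf_le hbddq (Set.mem_insert_of_mem _ ⟨t, ht, rfl⟩)
      have := mul_le_mul_of_nonneg_left h1 ha
      have := mul_le_mul_of_nonneg_left h2 hb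
      linarith
  · -- monotonicity
    rintro w1 w2 ⟨M1, hw1b⟩ ⟨M2, hw2b⟩ hmw1 hmw2 hle φ0 φ1 h0 h1
    set M : ℝ := max (max M1 M2) 0 with hMdef
    have hM : (0:ℝ) ≤ M := le_max_right _ _
    have hw1 : ∀ p, |w1 p| ≤ M := fun p =>
      (hw1b p).trans ((le_max_left _ _).trans (le_max_left _ _))
    have hw2 : ∀ p, |w2 p| ≤ M := fun p =>
      (hw2b p).trans ((le_max_right _ _).trans (le_max_left _ _))
    have hm1' := hFmeas w1 hmw1 φ0 φ1
    have hm2' := hFmeas w2 hmw2 φ0 φ1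
    have hi1 := hFint w1 M φ0 φ1 hM hw1 hm1'
    have hi2 := hFint w2 M φ0 φ1 hM hw2 hm2'
    have hptwise : ∀ u, F w1 φ0 φ1 u ≤ F w2 φ0 φ1 u := by
      intro u
      rw [hFdef]
      simp only
      apply mul_le_mul_of_nonneg_left _ (Real.exp_pos _).le
      have := hle ((1 - 1 / μ) * X u φ0, (1 + 1 / μ) * Y u φ1)
      nlinarith
    have hbdd1 : BddBelow (insert (Jinfty l μ c X Y w1 φ0 φ1)
        ((fun t => Jop l μ c X Y w1 t φ0 φ1) '' Set.Ici (0:ℝ))) := by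
      refine ⟨-(∫ u in Set.Ioi (0:ℝ), Cb M φ0 φ1 * Real.exp (-((μ - 1) / 2) * u)), ?_⟩
      intro v hv
      exact neg_le_of_abs_le (hmembd w1 M φ0 φ1 hM hw1 hm1' v hv)
    show Jzero l μ c X Y w1 φ0 φ1 ≤ sInf (insert (Jinfty l μ c X Y w2 φ0 φ1)
      ((fun t => Jop l μ c X Y w2 t φ0 φ1) '' Set.Ici (0:ℝ)))
    apply le_csInf (hnonempty w2 φ0 φ1)
    rintro v (rfl | ⟨t, ht, rfl⟩)
    · refine le_trans (csInf_le hbdd1 (Set.mem_insert _ _)) ?_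
      rw [hJinf, hJinf]
      exact setIntegral_mono_on hi1 hi2 measurableSet_Ioi (fun u _ => hptwise u)
    · beta_reduce
      have ht' := Set.mem_Ici.mp ht
      refine le_trans (csInf_le hbdd1 (Set.mem_insert_of_mem _ ⟨t, ht, rfl⟩)) ?_
      show Jop l μ c X Y w1 t φ0 φ1 ≤ Jop l μ c X Y w2 t φ0 φ1
      rw [hJop, hJop]
      exact intervalIntegral.integral_mono_on ht'
        (hFintt w1 M φ0 φ1 hM hw1 hm1' t ht') (hFintt w2 M φ0 φ1 hM hw2 hm2' t ht')
        (fun u _ => hptwise u)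
end

section
/- Define v₀ ≡ 0 and v_{n+1} = J₀v_n, where J₀w(φ₀,φ₁) = inf_{t∈[0,∞]} ∫₀ᵗ e^{-(λ+μ)u}(g + μ·(w∘S))(x(u,φ₀), y(u,φ₁)) du. Then the sequence (v_n) is decreasing: -√2/c ≤ ⋯ ≤ v_n ≤ v_{n-1} ≤ ⋯ ≤ v₁ ≤ v₀ ≡ 0 pointwise on ℝ₊², each v_n is bounded and concave, and the pointwise limit v = lim v_n exists and is bounded and concave. -/
/-- The value-iteration sequence `v₀ ≡ 0`, `v_{n+1} = J₀ v_n`. -/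
noncomputable def vseq (l μ c : ℝ) (X Y : ℝ → ℝ → ℝ) : ℕ → ℝ × ℝ → ℝ
  | 0 => fun _ => 0
  | n + 1 => fun p => Jzero l μ c X Y (vseq l μ c X Y n) p.1 p.2

open Real MeasureTheory Set Filter

set_option linter.unusedSectionVars false
set_option linter.unusedVariables false
set_option linter.deprecated false

namespace S7


lemma expderiv (k s : ℝ) :
    HasDerivAt (fun s => Real.exp (-(k*s))) (Real.exp (-(k*s)) * (-k)) s := by
  simpa using (((hasDerivAt_id s).const_mul k).neg.exp)

lemma mono_aux {f f' : ℝ → ℝ} (h : ∀ s, HasDerivAt f (f' s) s)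
    (h' : ∀ s, 0 < s → 0 ≤ f' s) {u : ℝ} (hu : 0 ≤ u) : f 0 ≤ f u := by
  have hmono : MonotoneOn f (Ici 0) := by
    apply monotoneOn_of_deriv_nonneg (convex_Ici 0)
    · exact Continuous.continuousOn (continuous_iff_continuousAt.mpr
        (fun x => (h x).continuousAt))
    · intro x _
      exact ((h x).differentiableAt).differentiableWithinAt
    · intro x hx
      rw [interior_Ici] at hx
      rw [(h x).deriv]
      exact h' x hx
  exact hmono self_mem_Ici hu hu

section Flow
variable {k C : ℝ} {Z : ℝ → ℝ → ℝ}
  (hZ0 : ∀ φ, Z 0 φ = φ)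
  (hZ : ∀ φ t, HasDerivAt (fun s => Z s φ) (k * Z t φ + C) t)
include hZ0 hZ

lemma flow_affine (u φ : ℝ) : Z u φ = Real.exp (k*u) * φ + Z u 0 := by
  have key : ∀ s, HasDerivAt (fun s => Real.exp (-(k*s)) * (Z s φ - Z s 0)) 0 s := by
    intro s
    have h1 := (expderiv k s).mul ((hZ φ s).sub (hZ 0 s))
    refine h1.congr_deriv ?_
    simp only [Pi.sub_apply]
    ring
  have hc := is_const_of_deriv_eq_zero (f := fun s => Real.exp (-(k*s)) * (Z s φ - Z s 0))
      (fun s => (key s).differentiableAt) (fun s => (key s).deriv) u 0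
  simp only [mul_zero, neg_zero, Real.exp_zero, one_mul, hZ0] at hc
  have h1 : Real.exp (k*u) * Real.exp (-(k*u)) = 1 := by
    rw [← Real.exp_add]; simp
  linear_combination Real.exp (k*u) * hc - (Z u φ - Z u 0) * h1

omit hZ0 in
lemma flow_cont (φ : ℝ) : Continuous (fun u => Z u φ) :=
  continuous_iff_continuousAt.mpr (fun x => (hZ φ x).continuousAt)

lemma flow_zero_nonneg (hC : 0 ≤ C) {u : ℝ} (hu : 0 ≤ u) : 0 ≤ Z u 0 := by
  have hd : ∀ s, HasDerivAt (fun s => Real.exp (-(k*s)) * Z s 0) (C * Real.exp (-(k*s))) s := by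
    intro s
    have h1 := (expderiv k s).mul (hZ 0 s)
    refine h1.congr_deriv ?_
    ring
  have h0 : (fun s => Real.exp (-(k*s)) * Z s 0) 0 ≤ (fun s => Real.exp (-(k*s)) * Z s 0) u :=
    mono_aux hd (fun s _ => mul_nonneg hC (Real.exp_pos _).le) hu
  simp only [mul_zero, neg_zero, Real.exp_zero, one_mul, hZ0] at h0
  nlinarith [Real.exp_pos (-(k*u)), h0]

lemma flow_zero_le (hC : 0 ≤ C) {u : ℝ} (hu : 0 ≤ u) :
    Z u 0 ≤ C * u * Real.exp (max k 0 * u) := by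
  set K := max k 0 with hK
  have hd : ∀ s, HasDerivAt
      (fun s => C * s * Real.exp ((K - k) * s) - Real.exp (-(k*s)) * Z s 0)
      (C * Real.exp ((K - k) * s) + C * s * ((K - k) * Real.exp ((K - k) * s))
        - C * Real.exp (-(k*s))) s := by
    intro s
    have e1 : HasDerivAt (fun s : ℝ => Real.exp ((K - k) * s)) ((K - k) * Real.exp ((K - k) * s)) s := by
      simpa [mul_comm] using (((hasDerivAt_id s).const_mul (K - k)).exp)
    have e2 : HasDerivAt (fun s : ℝ => C * s) C s := by
      simpa using (hasDerivAt_id s).const_mul C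
    have h2 := (expderiv k s).mul (hZ 0 s)
    have h1 := (e2.mul e1).sub h2
    refine h1.congr_deriv ?_
    ring
  have hmono := mono_aux hd (fun s hs => by
    have h1 : Real.exp (-(k*s)) ≤ Real.exp ((K - k) * s) := by
      apply Real.exp_le_exp.mpr
      have : (0:ℝ) ≤ K := le_max_right _ _
      nlinarith
    have h2 : (0:ℝ) ≤ K - k := sub_nonneg.mpr (le_max_left _ _)
    have h3 := Real.exp_pos ((K - k) * s)
    nlinarith [mul_nonneg hC (sub_nonneg.mpr h1),
      mul_nonneg (mul_nonneg (mul_nonneg hC hs.le) h2) h3.le]) hu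
  simp only [mul_zero, neg_zero, Real.exp_zero, one_mul, zero_mul, mul_one, hZ0] at hmono
  -- hmono : 0 - Z 0 0 ≤ C * u * exp ((K-k)*u) - exp (-(k*u)) * Z u 0
  have h3 : Real.exp (-(k*u)) * Z u 0 ≤ C * u * Real.exp ((K - k) * u) := by
    linarith
  have h4 : Real.exp (k * u) * (Real.exp (-(k*u)) * Z u 0) ≤
      Real.exp (k * u) * (C * u * Real.exp ((K - k) * u)) :=
    mul_le_mul_of_nonneg_left h3 (Real.exp_pos _).le
  have h5 : Real.exp (k*u) * Real.exp (-(k*u)) = 1 := by rw [← Real.exp_add]; simp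
  have h6 : Real.exp (k*u) * Real.exp ((K - k) * u) = Real.exp (K * u) := by
    rw [← Real.exp_add]; ring_nf
  calc Z u 0 = Real.exp (k*u) * Real.exp (-(k*u)) * Z u 0 := by rw [h5]; ring
    _ = Real.exp (k * u) * (Real.exp (-(k*u)) * Z u 0) := by ring
    _ ≤ Real.exp (k * u) * (C * u * Real.exp ((K - k) * u)) := h4
    _ = C * u * (Real.exp (k*u) * Real.exp ((K - k) * u)) := by ring
    _ = C * u * Real.exp (K * u) := by rw [h6]

end Flow



lemma exp_prod_one (x : ℝ) : Real.exp x * Real.exp (-x) = 1 := by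
  rw [← Real.exp_add, add_neg_cancel, Real.exp_zero]

lemma integrable_bound {f : ℝ → ℝ} (hm : AEStronglyMeasurable f (volume.restrict (Ioi 0)))
    {A a : ℝ} (ha : 0 < a) (h : ∀ u ∈ Ioi (0:ℝ), |f u| ≤ A * (1+u) * Real.exp (-a*u)) :
    IntegrableOn f (Ioi 0) := by
  have hg : IntegrableOn (fun u => (|A| * (1 + 2/a)) * Real.exp (-(a/2)*u)) (Ioi 0) :=
    (exp_neg_integrableOn_Ioi 0 (by positivity)).const_mul _
  apply Integrable.mono' hg hm
  filter_upwards [ae_restrict_mem measurableSet_Ioi] with u hu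
  have hu0 : (0:ℝ) < u := hu
  have h1 : |f u| ≤ A * (1+u) * Real.exp (-a*u) := h u hu
  have hA : A * (1+u) * Real.exp (-a*u) ≤ |A| * ((1+u) * Real.exp (-a*u)) := by
    have h0 : 0 ≤ (1+u) * Real.exp (-a*u) :=
      mul_nonneg (by linarith) (Real.exp_pos _).le
    calc A * (1+u) * Real.exp (-a*u) = A * ((1+u) * Real.exp (-a*u)) := by ring
      _ ≤ |A| * ((1+u) * Real.exp (-a*u)) := mul_le_mul_of_nonneg_right (le_abs_self A) h0
  have h4 : Real.exp ((a/2)*u) * Real.exp (-((a/2)*u)) = 1 := exp_prod_one _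
  have h3 : (a/2)*u + 1 ≤ Real.exp ((a/2)*u) := Real.add_one_le_exp _
  have h5 : (a/2) * (u * Real.exp (-((a/2)*u))) ≤ 1 := by
    have := mul_le_mul_of_nonneg_right (show (a/2)*u ≤ Real.exp ((a/2)*u) by linarith)
      (Real.exp_pos (-((a/2)*u))).le
    calc (a/2) * (u * Real.exp (-((a/2)*u))) = (a/2)*u * Real.exp (-((a/2)*u)) := by ring
      _ ≤ Real.exp ((a/2)*u) * Real.exp (-((a/2)*u)) := this
      _ = 1 := h4
  have h6 : u * Real.exp (-((a/2)*u)) ≤ 2/a := by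
    rw [le_div_iff₀ ha]
    linarith
  have key : (1+u) * Real.exp (-a*u) ≤ (1 + 2/a) * Real.exp (-(a/2)*u) := by
    have e1 : Real.exp (-a*u) = Real.exp (-((a/2)*u)) * Real.exp (-((a/2)*u)) := by
      rw [← Real.exp_add]; ring_nf
    have e2 : Real.exp (-a*u) ≤ Real.exp (-((a/2)*u)) := by
      apply Real.exp_le_exp.mpr; nlinarith
    have e3 : Real.exp (-(a/2)*u) = Real.exp (-((a/2)*u)) := by ring_nf
    rw [e3]
    have := Real.exp_pos (-((a/2)*u))
    nlinarith [mul_le_mul_of_nonneg_right h6 this.le]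
  have hnrm : ‖f u‖ = |f u| := rfl
  rw [hnrm]
  calc |f u| ≤ A * (1+u) * Real.exp (-a*u) := h1
    _ ≤ |A| * ((1+u) * Real.exp (-a*u)) := hA
    _ ≤ |A| * ((1 + 2/a) * Real.exp (-(a/2)*u)) :=
        mul_le_mul_of_nonneg_left key (abs_nonneg A)
    _ = |A| * (1 + 2/a) * Real.exp (-(a/2)*u) := by ring

lemma exp_integral_Ioi {a : ℝ} (ha : 0 < a) :
    ∫ u in Ioi (0:ℝ), Real.exp (-a*u) = 1/a := by
  have hderiv : ∀ x ∈ Ioi (0:ℝ), HasDerivAt (fun u => -(1/a) * Real.exp (-a*u))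
      (Real.exp (-a*x)) x := by
    intro x _
    have h1 : HasDerivAt (fun u : ℝ => Real.exp (-a*u)) (Real.exp (-a*x) * (-a)) x := by
      simpa [mul_comm] using ((hasDerivAt_id x).const_mul (-a)).exp
    have := h1.const_mul (-(1/a))
    refine this.congr_deriv ?_
    field_simp
  have hint : IntegrableOn (fun u => Real.exp (-a*u)) (Ioi (0:ℝ)) :=
    exp_neg_integrableOn_Ioi 0 ha
  have hlim : Tendsto (fun u => -(1/a) * Real.exp (-a*u)) atTop (nhds 0) := by
    have h2 : Tendsto (fun u : ℝ => -a*u) atTop atBot :=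
      tendsto_id.const_mul_atTop_of_neg (by linarith)
    have h3 : Tendsto (fun u : ℝ => Real.exp (-a*u)) atTop (nhds 0) :=
      Real.tendsto_exp_atBot.comp h2
    simpa using h3.const_mul (-(1/a))
  have hcont : ContinuousWithinAt (fun u => -(1/a) * Real.exp (-a*u)) (Ici 0) 0 :=
    (continuous_const.mul (Real.continuous_exp.comp
      (continuous_const.mul continuous_id))).continuousWithinAt
  have := MeasureTheory.integral_Ioi_of_hasDerivAt_of_tendsto
    hcont hderiv hint hlim
  simpa using this


def Q : Set (ℝ × ℝ) := {p : ℝ × ℝ | 0 ≤ p.1 ∧ 0 ≤ p.2}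

lemma convexQ : Convex ℝ Q := by
  have h : Q = Set.Ici ((0,0) : ℝ × ℝ) := by
    ext p; simp [Q, Prod.le_def]
  rw [h]; exact convex_Ici _

/-- the integrand -/
noncomputable def itg (l μ c : ℝ) (X Y : ℝ → ℝ → ℝ) (w : ℝ × ℝ → ℝ)
    (p : ℝ × ℝ) (u : ℝ) : ℝ :=
  Real.exp (-(l + μ) * u) * ((X u p.1 + Y u p.2 - (l / c) * Real.sqrt 2) +
      μ * w ((1 - 1 / μ) * X u p.1, (1 + 1 / μ) * Y u p.2))

def Jset (l μ c : ℝ) (X Y : ℝ → ℝ → ℝ) (w : ℝ × ℝ → ℝ) (p : ℝ × ℝ) : Set ℝ :=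
  insert (Jinfty l μ c X Y w p.1 p.2)
    ((fun t => Jop l μ c X Y w t p.1 p.2) '' Set.Ici (0:ℝ))

lemma Jop_eq (l μ c : ℝ) (X Y : ℝ → ℝ → ℝ) (w : ℝ × ℝ → ℝ) (t : ℝ) (p : ℝ × ℝ) :
    Jop l μ c X Y w t p.1 p.2 = ∫ u in (0:ℝ)..t, itg l μ c X Y w p u := rfl

lemma Jinfty_eq (l μ c : ℝ) (X Y : ℝ → ℝ → ℝ) (w : ℝ × ℝ → ℝ) (p : ℝ × ℝ) :
    Jinfty l μ c X Y w p.1 p.2 = ∫ u in Ioi (0:ℝ), itg l μ c X Y w p u := rfl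

lemma Jzero_eq (l μ c : ℝ) (X Y : ℝ → ℝ → ℝ) (w : ℝ × ℝ → ℝ) (p : ℝ × ℝ) :
    Jzero l μ c X Y w p.1 p.2 = sInf (Jset l μ c X Y w p) := rfl

lemma Jset_nonempty (l μ c : ℝ) (X Y : ℝ → ℝ → ℝ) (w : ℝ × ℝ → ℝ) (p : ℝ × ℝ) :
    (Jset l μ c X Y w p).Nonempty := ⟨_, Set.mem_insert _ _⟩

/-- goodness of `w` -/
def Good (c : ℝ) (w : ℝ × ℝ → ℝ) : Prop :=
  (∀ p ∈ Q, -(Real.sqrt 2 / c) ≤ w p ∧ w p ≤ 0) ∧ ConcaveOn ℝ Q w ∧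
  ∃ K : ℝ, 0 ≤ K ∧ ∀ p ∈ Q, ∀ q ∈ Q, |w p - w q| ≤ K * (|p.1 - q.1| + |p.2 - q.2|)

lemma Good.abs_le {c : ℝ} {w : ℝ × ℝ → ℝ} (hc : 0 < c) (hw : Good c w) :
    ∀ p ∈ Q, |w p| ≤ Real.sqrt 2 / c := by
  intro p hp
  have h1 := (hw.1 p hp).1
  have h2 := (hw.1 p hp).2
  rw [_root_.abs_le]
  have h3 : 0 ≤ Real.sqrt 2 / c := by positivity
  exact ⟨by linarith, by linarith⟩

lemma Good.continuousOn {c : ℝ} {w : ℝ × ℝ → ℝ} (hw : Good c w) : ContinuousOn w Q := by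
  obtain ⟨K, hK0, hK⟩ := hw.2.2
  have hlip : LipschitzOnWith (2*K).toNNReal w Q := by
    rw [lipschitzOnWith_iff_dist_le_mul]
    intro x hx y hy
    have h2 : ((2*K).toNNReal : ℝ) = 2*K := Real.coe_toNNReal _ (by linarith)
    rw [Real.dist_eq, h2]
    have a1 : |x.1 - y.1| ≤ dist x y := by
      rw [Prod.dist_eq]
      exact le_trans (le_of_eq (Real.dist_eq _ _).symm) (le_max_left _ _)
    have a2 : |x.2 - y.2| ≤ dist x y := by
      rw [Prod.dist_eq]
      exact le_trans (le_of_eq (Real.dist_eq _ _).symm) (le_max_right _ _)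
    calc |w x - w y| ≤ K * (|x.1 - y.1| + |x.2 - y.2|) := hK x hx y hy
      _ ≤ 2*K * dist x y := by nlinarith [dist_nonneg (x := x) (y := y)]
  exact hlip.continuousOn

structure Setup (l μ c m : ℝ) (X Y : ℝ → ℝ → ℝ) : Prop where
  hl : 0 < l
  hc : 0 < c
  hμ : 1 < μ
  hm1 : -1 < m
  hm2 : m < 1
  hX0 : ∀ φ, X 0 φ = φ
  hX : ∀ φ t, HasDerivAt (fun s => X s φ) ((l + 1) * X t φ + l * (1 - m) / Real.sqrt 2) t
  hY0 : ∀ φ, Y 0 φ = φ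
  hY : ∀ φ t, HasDerivAt (fun s => Y s φ) ((l - 1) * Y t φ + l * (1 + m) / Real.sqrt 2) t


namespace Setup

variable {l mu c m : ℝ} {X Y : ℝ → ℝ → ℝ}

section
variable (S : Setup l mu c m X Y)
include S

lemma hC0 : 0 ≤ l * (1 - m) / Real.sqrt 2 :=
  div_nonneg (mul_nonneg S.hl.le (by linarith [S.hm2])) (Real.sqrt_nonneg 2)

lemma hC1 : 0 ≤ l * (1 + m) / Real.sqrt 2 :=
  div_nonneg (mul_nonneg S.hl.le (by linarith [S.hm1])) (Real.sqrt_nonneg 2)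

lemma Xeq (u φ : ℝ) : X u φ = Real.exp ((l+1)*u) * φ + X u 0 :=
  flow_affine S.hX0 S.hX u φ

lemma Yeq (u φ : ℝ) : Y u φ = Real.exp ((l-1)*u) * φ + Y u 0 :=
  flow_affine S.hY0 S.hY u φ

lemma Xcont (φ : ℝ) : Continuous (fun u => X u φ) := flow_cont S.hX φ

lemma Ycont (φ : ℝ) : Continuous (fun u => Y u φ) := flow_cont S.hY φ

lemma X0nn {u : ℝ} (hu : 0 ≤ u) : 0 ≤ X u 0 :=
  flow_zero_nonneg S.hX0 S.hX S.hC0 hu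

lemma Y0nn {u : ℝ} (hu : 0 ≤ u) : 0 ≤ Y u 0 :=
  flow_zero_nonneg S.hY0 S.hY S.hC1 hu

lemma Xnn {φ u : ℝ} (hφ : 0 ≤ φ) (hu : 0 ≤ u) : 0 ≤ X u φ := by
  rw [S.Xeq]
  exact add_nonneg (mul_nonneg (Real.exp_pos _).le hφ) (S.X0nn hu)

lemma Ynn {φ u : ℝ} (hφ : 0 ≤ φ) (hu : 0 ≤ u) : 0 ≤ Y u φ := by
  rw [S.Yeq]
  exact add_nonneg (mul_nonneg (Real.exp_pos _).le hφ) (S.Y0nn hu)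

lemma Xle {φ u : ℝ} (hφ : 0 ≤ φ) (hu : 0 ≤ u) :
    X u φ ≤ (φ + l * (1 - m) / Real.sqrt 2 * u) * Real.exp ((l+1)*u) := by
  have h1 := flow_zero_le S.hX0 S.hX S.hC0 hu
  have h2 : max (l+1) 0 = l + 1 := max_eq_left (by linarith [S.hl])
  rw [h2] at h1
  rw [S.Xeq]
  nlinarith [Real.exp_pos ((l+1)*u)]

lemma Yle {φ u : ℝ} (hφ : 0 ≤ φ) (hu : 0 ≤ u) :
    Y u φ ≤ (φ + l * (1 + m) / Real.sqrt 2 * u) * Real.exp (max (l-1) 0 * u) := by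
  have h1 := flow_zero_le S.hY0 S.hY S.hC1 hu
  have h3 : Real.exp ((l-1)*u) ≤ Real.exp (max (l-1) 0 * u) :=
    Real.exp_le_exp.mpr (mul_le_mul_of_nonneg_right (le_max_left _ _) hu)
  rw [S.Yeq]
  nlinarith [Real.exp_pos (max (l-1) 0 * u), Real.exp_pos ((l-1)*u)]

end
end Setup

/-- decay rate -/
noncomputable def del (l mu : ℝ) : ℝ :=
  min (mu - 1) (min (l + mu - max (l-1) 0) (l + mu))

namespace Setup
section
variable {l mu c m : ℝ} {X Y : ℝ → ℝ → ℝ} (S : Setup l mu c m X Y)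
include S

lemma hdel : 0 < del l mu := by
  have h1 : max (l-1) 0 < l + mu := max_lt (by linarith [S.hμ]) (by linarith [S.hl, S.hμ])
  exact lt_min (by linarith [S.hμ]) (lt_min (by linarith) (by linarith [S.hl, S.hμ]))

lemma del_le1 : del l mu ≤ mu - 1 := min_le_left _ _
lemma del_le2 : del l mu ≤ l + mu - max (l-1) 0 := le_trans (min_le_right _ _) (min_le_left _ _)
lemma del_le3 : del l mu ≤ l + mu := le_trans (min_le_right _ _) (min_le_right _ _)

lemma gammaQ {p : ℝ × ℝ} (hp : p ∈ Q) {u : ℝ} (hu : 0 ≤ u) :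
    ((1 - 1/mu) * X u p.1, (1 + 1/mu) * Y u p.2) ∈ Q := by
  have hmu0 : 0 < mu := by linarith [S.hμ]
  have h1 : 1/mu ≤ 1 := by
    rw [div_le_one hmu0]; linarith [S.hμ]
  have h2 : 0 ≤ 1/mu := by positivity
  exact ⟨mul_nonneg (by linarith) (S.Xnn hp.1 hu), mul_nonneg (by linarith) (S.Ynn hp.2 hu)⟩

lemma itg_contOn {w : ℝ × ℝ → ℝ} (hw : Good c w) {p : ℝ × ℝ} (hp : p ∈ Q) :
    ContinuousOn (itg l mu c X Y w p) (Ici 0) := by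
  have hγ : ContinuousOn
      (fun u => w ((1 - 1/mu) * X u p.1, (1 + 1/mu) * Y u p.2)) (Ici 0) := by
    apply hw.continuousOn.comp
    · exact ((continuous_const.mul (S.Xcont p.1)).prodMk
        (continuous_const.mul (S.Ycont p.2))).continuousOn
    · intro u hu
      exact S.gammaQ hp hu
  apply ContinuousOn.mul
  · exact (Real.continuous_exp.comp (continuous_const.mul continuous_id)).continuousOn
  · exact (((S.Xcont p.1).continuousOn.add (S.Ycont p.2).continuousOn).sub
      continuousOn_const).add (continuousOn_const.mul hγ)

lemma itg_abs_le {w : ℝ × ℝ → ℝ} (hw : Good c w) {p : ℝ × ℝ} (hp : p ∈ Q) :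
    ∀ u ∈ Ioi (0:ℝ), |itg l mu c X Y w p u| ≤
      ((p.1 + l * (1 - m) / Real.sqrt 2) + (p.2 + l * (1 + m) / Real.sqrt 2)
        + ((l/c) * Real.sqrt 2 + mu * (Real.sqrt 2 / c))) * (1+u) * Real.exp (-(del l mu)*u) := by
  intro u hu
  have hu0 : (0:ℝ) < u := hu
  have hX := S.Xnn hp.1 hu0.le
  have hY := S.Ynn hp.2 hu0.le
  have hlc : 0 ≤ (l/c) * Real.sqrt 2 := by
    have := S.hl; have := S.hc
    positivity
  have hwB := hw.abs_le S.hc _ (S.gammaQ hp hu0.le)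
  have hmu0 : (0:ℝ) ≤ mu := by linarith [S.hμ]
  set W := w ((1 - 1/mu) * X u p.1, (1 + 1/mu) * Y u p.2) with hW
  have habs : |(X u p.1 + Y u p.2 - (l/c) * Real.sqrt 2) + mu * W| ≤
      (X u p.1 + Y u p.2 + (l/c) * Real.sqrt 2) + mu * (Real.sqrt 2 / c) := by
    have h1 : |X u p.1 + Y u p.2 - (l/c) * Real.sqrt 2| ≤
        X u p.1 + Y u p.2 + (l/c) * Real.sqrt 2 :=
      abs_le.mpr ⟨by linarith, by linarith⟩
    have h2 : |mu * W| ≤ mu * (Real.sqrt 2 / c) := by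
      rw [abs_mul, abs_of_nonneg hmu0]
      exact mul_le_mul_of_nonneg_left hwB hmu0
    calc |(X u p.1 + Y u p.2 - (l/c) * Real.sqrt 2) + mu * W|
        ≤ |X u p.1 + Y u p.2 - (l/c) * Real.sqrt 2| + |mu * W| := abs_add_le _ _
      _ ≤ _ := by linarith
  have hE := Real.exp_pos (-(l+mu)*u)
  have step1 : |itg l mu c X Y w p u| ≤ Real.exp (-(l+mu)*u) *
      ((X u p.1 + Y u p.2 + (l/c) * Real.sqrt 2) + mu * (Real.sqrt 2 / c)) := by
    rw [itg, abs_mul, abs_of_pos hE]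
    exact mul_le_mul_of_nonneg_left habs hE.le
  -- term bounds
  have eX : Real.exp (-(l+mu)*u) * X u p.1 ≤
      (p.1 + l * (1 - m) / Real.sqrt 2) * (1+u) * Real.exp (-(del l mu)*u) := by
    have h3 := S.Xle hp.1 hu0.le
    have h4 : Real.exp (-(l+mu)*u) * Real.exp ((l+1)*u) = Real.exp (-(mu-1)*u) := by
      rw [← Real.exp_add]; ring_nf
    have h5 : Real.exp (-(mu-1)*u) ≤ Real.exp (-(del l mu)*u) :=
      Real.exp_le_exp.mpr (by nlinarith [S.del_le1])
    have h6 : p.1 + l * (1 - m) / Real.sqrt 2 * u ≤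
        (p.1 + l * (1 - m) / Real.sqrt 2) * (1+u) := by nlinarith [S.hC0, hp.1]
    calc Real.exp (-(l+mu)*u) * X u p.1
        ≤ Real.exp (-(l+mu)*u) * ((p.1 + l * (1 - m) / Real.sqrt 2 * u) * Real.exp ((l+1)*u)) :=
          mul_le_mul_of_nonneg_left h3 hE.le
      _ = (p.1 + l * (1 - m) / Real.sqrt 2 * u) * (Real.exp (-(l+mu)*u) * Real.exp ((l+1)*u)) := by
          ring
      _ = (p.1 + l * (1 - m) / Real.sqrt 2 * u) * Real.exp (-(mu-1)*u) := by rw [h4]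
      _ ≤ (p.1 + l * (1 - m) / Real.sqrt 2) * (1+u) * Real.exp (-(del l mu)*u) := by
          apply mul_le_mul h6 h5 (Real.exp_pos _).le
          nlinarith [S.hC0, hp.1]
  have eY : Real.exp (-(l+mu)*u) * Y u p.2 ≤
      (p.2 + l * (1 + m) / Real.sqrt 2) * (1+u) * Real.exp (-(del l mu)*u) := by
    have h3 := S.Yle hp.2 hu0.le
    have h4 : Real.exp (-(l+mu)*u) * Real.exp (max (l-1) 0 * u) =
        Real.exp (-(l + mu - max (l-1) 0)*u) := by
      rw [← Real.exp_add]; ring_nf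
    have h5 : Real.exp (-(l + mu - max (l-1) 0)*u) ≤ Real.exp (-(del l mu)*u) :=
      Real.exp_le_exp.mpr (by nlinarith [S.del_le2])
    have h6 : p.2 + l * (1 + m) / Real.sqrt 2 * u ≤
        (p.2 + l * (1 + m) / Real.sqrt 2) * (1+u) := by nlinarith [S.hC1, hp.2]
    calc Real.exp (-(l+mu)*u) * Y u p.2
        ≤ Real.exp (-(l+mu)*u) * ((p.2 + l * (1 + m) / Real.sqrt 2 * u) *
            Real.exp (max (l-1) 0 * u)) := mul_le_mul_of_nonneg_left h3 hE.le
      _ = (p.2 + l * (1 + m) / Real.sqrt 2 * u) *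
            (Real.exp (-(l+mu)*u) * Real.exp (max (l-1) 0 * u)) := by ring
      _ = (p.2 + l * (1 + m) / Real.sqrt 2 * u) * Real.exp (-(l + mu - max (l-1) 0)*u) := by
          rw [h4]
      _ ≤ (p.2 + l * (1 + m) / Real.sqrt 2) * (1+u) * Real.exp (-(del l mu)*u) := by
          apply mul_le_mul h6 h5 (Real.exp_pos _).le
          nlinarith [S.hC1, hp.2]
  have eC : Real.exp (-(l+mu)*u) * ((l/c) * Real.sqrt 2 + mu * (Real.sqrt 2 / c)) ≤
      ((l/c) * Real.sqrt 2 + mu * (Real.sqrt 2 / c)) * (1+u) * Real.exp (-(del l mu)*u) := by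
    have h5 : Real.exp (-(l+mu)*u) ≤ Real.exp (-(del l mu)*u) :=
      Real.exp_le_exp.mpr (by nlinarith [S.del_le3])
    have hcc : 0 ≤ (l/c) * Real.sqrt 2 + mu * (Real.sqrt 2 / c) := by
      have h7 : 0 ≤ mu * (Real.sqrt 2 / c) :=
        mul_nonneg hmu0 (by have := S.hc; positivity)
      linarith
    have h8 : Real.exp (-(del l mu)*u) ≤ (1+u) * Real.exp (-(del l mu)*u) := by
      nlinarith [Real.exp_pos (-(del l mu)*u)]
    calc Real.exp (-(l+mu)*u) * ((l/c) * Real.sqrt 2 + mu * (Real.sqrt 2 / c))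
        ≤ Real.exp (-(del l mu)*u) * ((l/c) * Real.sqrt 2 + mu * (Real.sqrt 2 / c)) :=
          mul_le_mul_of_nonneg_right h5 hcc
      _ = ((l/c) * Real.sqrt 2 + mu * (Real.sqrt 2 / c)) * Real.exp (-(del l mu)*u) := by ring
      _ ≤ ((l/c) * Real.sqrt 2 + mu * (Real.sqrt 2 / c)) * ((1+u) * Real.exp (-(del l mu)*u)) :=
          mul_le_mul_of_nonneg_left h8 hcc
      _ = _ := by ring
  calc |itg l mu c X Y w p u| ≤ Real.exp (-(l+mu)*u) *
      ((X u p.1 + Y u p.2 + (l/c) * Real.sqrt 2) + mu * (Real.sqrt 2 / c)) := step1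
    _ = Real.exp (-(l+mu)*u) * X u p.1 + Real.exp (-(l+mu)*u) * Y u p.2
        + Real.exp (-(l+mu)*u) * ((l/c) * Real.sqrt 2 + mu * (Real.sqrt 2 / c)) := by ring
    _ ≤ _ := by linarith [eX, eY, eC]

lemma itg_integrableOn {w : ℝ × ℝ → ℝ} (hw : Good c w) {p : ℝ × ℝ} (hp : p ∈ Q) :
    IntegrableOn (itg l mu c X Y w p) (Ioi 0) := by
  apply integrable_bound
    (((S.itg_contOn hw hp).mono Ioi_subset_Ici_self).aestronglyMeasurable measurableSet_Ioi)
    S.hdel (S.itg_abs_le hw hp)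

lemma itg_intervalIntegrable {w : ℝ × ℝ → ℝ} (hw : Good c w) {p : ℝ × ℝ} (hp : p ∈ Q)
    {t : ℝ} (ht : 0 ≤ t) : IntervalIntegrable (itg l mu c X Y w p) volume 0 t := by
  rw [intervalIntegrable_iff, uIoc_of_le ht]
  exact (S.itg_integrableOn hw hp).mono_set Ioc_subset_Ioi_self

lemma itg_lb {w : ℝ × ℝ → ℝ} (hw : Good c w) {p : ℝ × ℝ} (hp : p ∈ Q) :
    ∀ u ∈ Ici (0:ℝ), -((l+mu) * (Real.sqrt 2/c)) * Real.exp (-(l+mu)*u) ≤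
      itg l mu c X Y w p u := by
  intro u hu
  have hu0 : (0:ℝ) ≤ u := hu
  have hX := S.Xnn hp.1 hu0
  have hY := S.Ynn hp.2 hu0
  have hwlb := (hw.1 _ (S.gammaQ hp hu0)).1
  have hmu0 : (0:ℝ) ≤ mu := by linarith [S.hμ]
  have hE := Real.exp_pos (-(l+mu)*u)
  have hlsq : (l/c) * Real.sqrt 2 = l * (Real.sqrt 2 / c) := by ring
  have hbr : -((l+mu) * (Real.sqrt 2/c)) ≤
      (X u p.1 + Y u p.2 - (l/c) * Real.sqrt 2) +
        mu * w ((1 - 1/mu) * X u p.1, (1 + 1/mu) * Y u p.2) := by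
    have h2 : mu * (-(Real.sqrt 2 / c)) ≤
        mu * w ((1 - 1/mu) * X u p.1, (1 + 1/mu) * Y u p.2) :=
      mul_le_mul_of_nonneg_left hwlb hmu0
    rw [hlsq]
    nlinarith [h2]
  calc -((l+mu) * (Real.sqrt 2/c)) * Real.exp (-(l+mu)*u)
      = Real.exp (-(l+mu)*u) * (-((l+mu) * (Real.sqrt 2/c))) := by ring
    _ ≤ Real.exp (-(l+mu)*u) * ((X u p.1 + Y u p.2 - (l/c) * Real.sqrt 2) +
        mu * w ((1 - 1/mu) * X u p.1, (1 + 1/mu) * Y u p.2)) :=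
        mul_le_mul_of_nonneg_left hbr hE.le
    _ = itg l mu c X Y w p u := by rw [itg]

end
end Setup

namespace Setup
section
variable {l mu c m : ℝ} {X Y : ℝ → ℝ → ℝ} (S : Setup l mu c m X Y)
include S

lemma hr : 0 < l + mu := by linarith [S.hl, S.hμ]

omit S in
lemma exp_int_Ioc_le {a : ℝ} (ha : 0 < a) {t : ℝ} (ht : 0 ≤ t) :
    ∫ u in (0:ℝ)..t, Real.exp (-a*u) ≤ 1/a := by
  rw [intervalIntegral.integral_of_le ht, ← exp_integral_Ioi ha]
  apply setIntegral_mono_set (exp_neg_integrableOn_Ioi 0 ha)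
    (ae_of_all _ (fun x => (Real.exp_pos _).le))
    (HasSubset.Subset.eventuallyLE Ioc_subset_Ioi_self)

omit S in
omit S in
lemma exp_integral_Ioi' {a : ℝ} (ha : 0 < a) :
    ∫ u in Ioi (0:ℝ), Real.exp (-(a*u)) = 1/a := by
  rw [← exp_integral_Ioi ha]
  congr 1
  ext u
  rw [neg_mul]

omit S in
lemma Jop0 {w : ℝ × ℝ → ℝ} {p : ℝ × ℝ} : Jop l mu c X Y w 0 p.1 p.2 = 0 := by
  rw [Jop_eq]; exact intervalIntegral.integral_same

omit S in
lemma zero_mem_Jset {w : ℝ × ℝ → ℝ} {p : ℝ × ℝ} : (0:ℝ) ∈ Jset l mu c X Y w p :=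
  Set.mem_insert_iff.mpr (Or.inr ⟨0, self_mem_Ici, Jop0⟩)

lemma mem_Jset_lb {w : ℝ × ℝ → ℝ} (hw : Good c w) {p : ℝ × ℝ} (hp : p ∈ Q) :
    ∀ x ∈ Jset l mu c X Y w p, -(Real.sqrt 2/c) ≤ x := by
  intro x hx
  have hr := S.hr
  have hint := S.itg_integrableOn hw hp
  have hlb := S.itg_lb hw hp
  have hlow : IntegrableOn (fun u => -((l+mu)*(Real.sqrt 2/c)) * Real.exp (-(l+mu)*u))
      (Ioi (0:ℝ)) := (exp_neg_integrableOn_Ioi 0 hr).const_mul _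
  rcases Set.mem_insert_iff.mp hx with h | ⟨t, ht, hteq⟩
  · subst h
    rw [Jinfty_eq]
    have hm := setIntegral_mono_on hlow hint measurableSet_Ioi
      (fun u hu => hlb u (le_of_lt hu : (0:ℝ) ≤ u))
    have hval : ∫ u in Ioi (0:ℝ), -((l+mu)*(Real.sqrt 2/c)) * Real.exp (-(l+mu)*u)
        = -(Real.sqrt 2/c) := by
      simp only [neg_mul]
      rw [integral_neg, MeasureTheory.integral_const_mul, exp_integral_Ioi' hr]
      have hc0 : c ≠ 0 := ne_of_gt S.hc
      have hr0 : l + mu ≠ 0 := ne_of_gt hr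
      field_simp
    linarith
  · subst hteq
    simp only
    rw [Jop_eq]
    have hiil : IntervalIntegrable
        (fun u => -((l+mu)*(Real.sqrt 2/c)) * Real.exp (-(l+mu)*u)) volume 0 t :=
      (continuous_const.mul (Real.continuous_exp.comp
        (continuous_const.mul continuous_id))).intervalIntegrable _ _
    have h1 := intervalIntegral.integral_mono_on ht hiil
      (S.itg_intervalIntegrable hw hp ht) (fun u hu => hlb u hu.1)
    have h3 : ∫ u in (0:ℝ)..t, -((l+mu)*(Real.sqrt 2/c)) * Real.exp (-(l+mu)*u)
        = -(((l+mu)*(Real.sqrt 2/c)) * ∫ u in (0:ℝ)..t, Real.exp (-(l+mu)*u)) := by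
      simp only [neg_mul]
      rw [intervalIntegral.integral_neg, intervalIntegral.integral_const_mul]
    have h4 := exp_int_Ioc_le hr ht
    have h5 : 0 ≤ (l+mu)*(Real.sqrt 2/c) := by
      have hc := S.hc
      positivity
    have h6 : ((l+mu)*(Real.sqrt 2/c)) * (∫ u in (0:ℝ)..t, Real.exp (-(l+mu)*u)) ≤
        ((l+mu)*(Real.sqrt 2/c)) * (1/(l+mu)) := mul_le_mul_of_nonneg_left h4 h5
    have h7 : ((l+mu)*(Real.sqrt 2/c)) * (1/(l+mu)) = Real.sqrt 2/c := by
      have hc0 : c ≠ 0 := ne_of_gt S.hc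
      have hr0 : l + mu ≠ 0 := ne_of_gt hr
      field_simp
    linarith

lemma Jset_bddBelow {w : ℝ × ℝ → ℝ} (hw : Good c w) {p : ℝ × ℝ} (hp : p ∈ Q) :
    BddBelow (Jset l mu c X Y w p) :=
  ⟨-(Real.sqrt 2/c), fun x hx => S.mem_Jset_lb hw hp x hx⟩

lemma Jzero_nonpos {w : ℝ × ℝ → ℝ} (hw : Good c w) {p : ℝ × ℝ} (hp : p ∈ Q) :
    Jzero l mu c X Y w p.1 p.2 ≤ 0 := by
  rw [Jzero_eq]
  exact csInf_le (S.Jset_bddBelow hw hp) zero_mem_Jset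

lemma Jzero_lb {w : ℝ × ℝ → ℝ} (hw : Good c w) {p : ℝ × ℝ} (hp : p ∈ Q) :
    -(Real.sqrt 2/c) ≤ Jzero l mu c X Y w p.1 p.2 := by
  rw [Jzero_eq]
  exact le_csInf (Jset_nonempty _ _ _ _ _ _ _) (S.mem_Jset_lb hw hp)

lemma Jzero_mono {w1 w2 : ℝ × ℝ → ℝ} (hw1 : Good c w1) (hw2 : Good c w2)
    (h12 : ∀ q ∈ Q, w1 q ≤ w2 q) {p : ℝ × ℝ} (hp : p ∈ Q) :
    Jzero l mu c X Y w1 p.1 p.2 ≤ Jzero l mu c X Y w2 p.1 p.2 := by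
  have hmu0 : (0:ℝ) ≤ mu := by linarith [S.hμ]
  have hpt : ∀ u ∈ Ici (0:ℝ), itg l mu c X Y w1 p u ≤ itg l mu c X Y w2 p u := by
    intro u hu
    have h := h12 _ (S.gammaQ hp hu)
    have h2 := mul_le_mul_of_nonneg_left h hmu0
    apply mul_le_mul_of_nonneg_left _ (Real.exp_pos _).le
    linarith
  rw [Jzero_eq l mu c X Y w2 p]
  apply le_csInf (Jset_nonempty _ _ _ _ _ _ _)
  intro b hb
  rcases Set.mem_insert_iff.mp hb with h | ⟨t, ht, hteq⟩
  · subst h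
    refine le_trans (b := Jinfty l mu c X Y w1 p.1 p.2) ?_ ?_
    · rw [Jzero_eq]
      exact csInf_le (S.Jset_bddBelow hw1 hp) (Set.mem_insert _ _)
    · rw [Jinfty_eq, Jinfty_eq]
      exact setIntegral_mono_on (S.itg_integrableOn hw1 hp) (S.itg_integrableOn hw2 hp)
        measurableSet_Ioi (fun u hu => hpt u (le_of_lt hu : (0:ℝ) ≤ u))
  · subst hteq
    simp only
    refine le_trans (b := Jop l mu c X Y w1 t p.1 p.2) ?_ ?_
    · rw [Jzero_eq]
      exact csInf_le (S.Jset_bddBelow hw1 hp)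
        (Set.mem_insert_iff.mpr (Or.inr ⟨t, ht, rfl⟩))
    · rw [Jop_eq, Jop_eq]
      exact intervalIntegral.integral_mono_on ht (S.itg_intervalIntegrable hw1 hp ht)
        (S.itg_intervalIntegrable hw2 hp ht) (fun u hu => hpt u hu.1)

end
end Setup

namespace Setup
section
variable {l mu c m : ℝ} {X Y : ℝ → ℝ → ℝ} (S : Setup l mu c m X Y)
include S

lemma Xcombo {a b : ℝ} (hab : a + b = 1) (u x y : ℝ) :
    X u (a*x + b*y) = a * X u x + b * X u y := by
  rw [S.Xeq u (a*x+b*y), S.Xeq u x, S.Xeq u y]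
  linear_combination (-(X u 0)) * hab

lemma Ycombo {a b : ℝ} (hab : a + b = 1) (u x y : ℝ) :
    Y u (a*x + b*y) = a * Y u x + b * Y u y := by
  rw [S.Yeq u (a*x+b*y), S.Yeq u x, S.Yeq u y]
  linear_combination (-(Y u 0)) * hab

lemma Jzero_concave {w : ℝ × ℝ → ℝ} (hw : Good c w) :
    ConcaveOn ℝ Q (fun p => Jzero l mu c X Y w p.1 p.2) := by
  refine ⟨convexQ, ?_⟩
  intro x hx y hy a b ha hb hab
  have hmu0 : (0:ℝ) ≤ mu := by linarith [S.hμ]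
  have hz : a • x + b • y ∈ Q := convexQ hx hy ha hb hab
  set z := a • x + b • y with hzdef
  have hz1 : z.1 = a * x.1 + b * y.1 := rfl
  have hz2 : z.2 = a * x.2 + b * y.2 := rfl
  simp only [smul_eq_mul]
  show a * Jzero l mu c X Y w x.1 x.2 + b * Jzero l mu c X Y w y.1 y.2 ≤
    Jzero l mu c X Y w z.1 z.2
  have key : ∀ u ∈ Ici (0:ℝ), a * itg l mu c X Y w x u + b * itg l mu c X Y w y u ≤
      itg l mu c X Y w z u := by
    intro u hu
    have hγx := S.gammaQ hx hu
    have hγy := S.gammaQ hy hu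
    have hXc : X u z.1 = a * X u x.1 + b * X u y.1 := by
      rw [hz1]; exact S.Xcombo hab u x.1 y.1
    have hYc : Y u z.2 = a * Y u x.2 + b * Y u y.2 := by
      rw [hz2]; exact S.Ycombo hab u x.2 y.2
    have hγz : ((1 - 1/mu) * X u z.1, (1 + 1/mu) * Y u z.2) =
        a • ((1 - 1/mu) * X u x.1, (1 + 1/mu) * Y u x.2) +
          b • ((1 - 1/mu) * X u y.1, (1 + 1/mu) * Y u y.2) := by
      have e1 : (1 - 1/mu) * X u z.1 =
          a * ((1 - 1/mu) * X u x.1) + b * ((1 - 1/mu) * X u y.1) := by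
        rw [hXc]; ring
      have e2 : (1 + 1/mu) * Y u z.2 =
          a * ((1 + 1/mu) * Y u x.2) + b * ((1 + 1/mu) * Y u y.2) := by
        rw [hYc]; ring
      exact Prod.ext e1 e2
    have hcc := hw.2.1.2 hγx hγy ha hb hab
    rw [← hγz] at hcc
    simp only [smul_eq_mul] at hcc
    have e1 : itg l mu c X Y w z u -
        (a * itg l mu c X Y w x u + b * itg l mu c X Y w y u)
        = Real.exp (-(l+mu)*u) * (mu *
            (w ((1 - 1/mu) * X u z.1, (1 + 1/mu) * Y u z.2)
              - (a * w ((1 - 1/mu) * X u x.1, (1 + 1/mu) * Y u x.2)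
                + b * w ((1 - 1/mu) * X u y.1, (1 + 1/mu) * Y u y.2)))) := by
      simp only [itg]
      rw [hXc, hYc]
      linear_combination (Real.exp (-(l+mu)*u) * ((l/c)*Real.sqrt 2)) * hab
    have e2 : 0 ≤ Real.exp (-(l+mu)*u) * (mu *
        (w ((1 - 1/mu) * X u z.1, (1 + 1/mu) * Y u z.2)
          - (a * w ((1 - 1/mu) * X u x.1, (1 + 1/mu) * Y u x.2)
            + b * w ((1 - 1/mu) * X u y.1, (1 + 1/mu) * Y u y.2)))) :=
      mul_nonneg (Real.exp_pos _).le (mul_nonneg hmu0 (by linarith [hcc]))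
    linarith [e1, e2]
  rw [Jzero_eq l mu c X Y w z]
  apply le_csInf (Jset_nonempty _ _ _ _ _ _ _)
  intro e he
  rcases Set.mem_insert_iff.mp he with h | ⟨t, ht, hteq⟩
  · subst h
    have h1 : a * Jzero l mu c X Y w x.1 x.2 ≤ a * Jinfty l mu c X Y w x.1 x.2 := by
      apply mul_le_mul_of_nonneg_left _ ha
      rw [Jzero_eq]
      exact csInf_le (S.Jset_bddBelow hw hx) (Set.mem_insert _ _)
    have h2 : b * Jzero l mu c X Y w y.1 y.2 ≤ b * Jinfty l mu c X Y w y.1 y.2 := by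
      apply mul_le_mul_of_nonneg_left _ hb
      rw [Jzero_eq]
      exact csInf_le (S.Jset_bddBelow hw hy) (Set.mem_insert _ _)
    have h3 : a * Jinfty l mu c X Y w x.1 x.2 + b * Jinfty l mu c X Y w y.1 y.2 ≤
        Jinfty l mu c X Y w z.1 z.2 := by
      rw [Jinfty_eq l mu c X Y w x, Jinfty_eq l mu c X Y w y, Jinfty_eq l mu c X Y w z,
        ← MeasureTheory.integral_const_mul, ← MeasureTheory.integral_const_mul,
        ← MeasureTheory.integral_add ((S.itg_integrableOn hw hx).const_mul a)
          ((S.itg_integrableOn hw hy).const_mul b)]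
      exact setIntegral_mono_on
        (((S.itg_integrableOn hw hx).const_mul a).add
          ((S.itg_integrableOn hw hy).const_mul b))
        (S.itg_integrableOn hw hz) measurableSet_Ioi
        (fun u hu => key u (le_of_lt hu : (0:ℝ) ≤ u))
    linarith
  · subst hteq
    simp only
    have h1 : a * Jzero l mu c X Y w x.1 x.2 ≤ a * Jop l mu c X Y w t x.1 x.2 := by
      apply mul_le_mul_of_nonneg_left _ ha
      rw [Jzero_eq]
      exact csInf_le (S.Jset_bddBelow hw hx) (Set.mem_insert_iff.mpr (Or.inr ⟨t, ht, rfl⟩))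
    have h2 : b * Jzero l mu c X Y w y.1 y.2 ≤ b * Jop l mu c X Y w t y.1 y.2 := by
      apply mul_le_mul_of_nonneg_left _ hb
      rw [Jzero_eq]
      exact csInf_le (S.Jset_bddBelow hw hy) (Set.mem_insert_iff.mpr (Or.inr ⟨t, ht, rfl⟩))
    have h3 : a * Jop l mu c X Y w t x.1 x.2 + b * Jop l mu c X Y w t y.1 y.2 ≤
        Jop l mu c X Y w t z.1 z.2 := by
      rw [Jop_eq l mu c X Y w t x, Jop_eq l mu c X Y w t y, Jop_eq l mu c X Y w t z,
        ← intervalIntegral.integral_const_mul, ← intervalIntegral.integral_const_mul,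
        ← intervalIntegral.integral_add ((S.itg_intervalIntegrable hw hx ht).const_mul a)
          ((S.itg_intervalIntegrable hw hy ht).const_mul b)]
      exact intervalIntegral.integral_mono_on ht
        (((S.itg_intervalIntegrable hw hx ht).const_mul a).add
          ((S.itg_intervalIntegrable hw hy ht).const_mul b))
        (S.itg_intervalIntegrable hw hz ht)
        (fun u hu => key u hu.1)
    linarith

end
end Setup

namespace Setup
section
variable {l mu c m : ℝ} {X Y : ℝ → ℝ → ℝ} (S : Setup l mu c m X Y)
include S

set_option maxHeartbeats 1000000 in
lemma itg_lip {w : ℝ × ℝ → ℝ} {K : ℝ} (hK0 : 0 ≤ K)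
    (hK : ∀ p ∈ Q, ∀ q ∈ Q, |w p - w q| ≤ K * (|p.1 - q.1| + |p.2 - q.2|))
    {p q : ℝ × ℝ} (hp : p ∈ Q) (hq : q ∈ Q) : ∀ u ∈ Ici (0:ℝ),
    |itg l mu c X Y w p u - itg l mu c X Y w q u| ≤
      ((1 + 2*mu*K) * (|p.1 - q.1| + |p.2 - q.2|)) *
        (Real.exp (-(mu-1)*u) + Real.exp (-(mu+1)*u)) := by
  intro u hu
  have hu0 : (0:ℝ) ≤ u := hu
  have hmu1 := S.hμ
  have hmu0 : (0:ℝ) < mu := by linarith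
  have hmuK : 0 ≤ mu * K := mul_nonneg hmu0.le hK0
  have him : 0 ≤ 1 - 1/mu := by
    have : 1/mu ≤ 1 := by rw [div_le_one hmu0]; linarith
    linarith
  have hip : 0 ≤ 1 + 1/mu := by positivity
  have him2 : 1 - 1/mu ≤ 2 := by
    have : 0 ≤ 1/mu := by positivity
    linarith
  have hip2 : 1 + 1/mu ≤ 2 := by
    have h1 : 1/mu ≤ 1 := by rw [div_le_one hmu0]; linarith
    linarith
  set d1 := |p.1 - q.1| with hd1def
  set d2 := |p.2 - q.2| with hd2def
  have hd1nn : 0 ≤ d1 := abs_nonneg _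
  have hd2nn : 0 ≤ d2 := abs_nonneg _
  set E1 := Real.exp ((l+1)*u) with hE1def
  set E2 := Real.exp ((l-1)*u) with hE2def
  have hE1 : 0 < E1 := Real.exp_pos _
  have hE2 : 0 < E2 := Real.exp_pos _
  have hdX : |X u p.1 - X u q.1| = E1 * d1 := by
    rw [S.Xeq u p.1, S.Xeq u q.1, show Real.exp ((l+1)*u) * p.1 + X u 0 -
      (Real.exp ((l+1)*u) * q.1 + X u 0) = Real.exp ((l+1)*u) * (p.1 - q.1) from by ring,
      abs_mul, abs_of_pos (Real.exp_pos _)]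
  have hdY : |Y u p.2 - Y u q.2| = E2 * d2 := by
    rw [S.Yeq u p.2, S.Yeq u q.2, show Real.exp ((l-1)*u) * p.2 + Y u 0 -
      (Real.exp ((l-1)*u) * q.2 + Y u 0) = Real.exp ((l-1)*u) * (p.2 - q.2) from by ring,
      abs_mul, abs_of_pos (Real.exp_pos _)]
  have hw' := hK _ (S.gammaQ hp hu0) _ (S.gammaQ hq hu0)
  have hγ1 : |(1-1/mu) * X u p.1 - (1-1/mu) * X u q.1| = (1-1/mu) * (E1 * d1) := by
    rw [show (1-1/mu) * X u p.1 - (1-1/mu) * X u q.1 =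
      (1-1/mu) * (X u p.1 - X u q.1) from by ring, abs_mul, abs_of_nonneg him, hdX]
  have hγ2 : |(1+1/mu) * Y u p.2 - (1+1/mu) * Y u q.2| = (1+1/mu) * (E2 * d2) := by
    rw [show (1+1/mu) * Y u p.2 - (1+1/mu) * Y u q.2 =
      (1+1/mu) * (Y u p.2 - Y u q.2) from by ring, abs_mul, abs_of_nonneg hip, hdY]
  rw [hγ1, hγ2] at hw'
  set Wp := w ((1 - 1/mu) * X u p.1, (1 + 1/mu) * Y u p.2) with hWp
  set Wq := w ((1 - 1/mu) * X u q.1, (1 + 1/mu) * Y u q.2) with hWq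
  have hdiff : itg l mu c X Y w p u - itg l mu c X Y w q u =
      Real.exp (-(l+mu)*u) * ((X u p.1 - X u q.1) + (Y u p.2 - Y u q.2)
        + mu * (Wp - Wq)) := by
    simp only [itg, hWp, hWq]
    ring
  have hbr : |(X u p.1 - X u q.1) + (Y u p.2 - Y u q.2) + mu * (Wp - Wq)| ≤
      E1 * d1 + E2 * d2 + mu * (K * ((1-1/mu) * (E1*d1) + (1+1/mu) * (E2*d2))) := by
    have t1 : |(X u p.1 - X u q.1) + (Y u p.2 - Y u q.2) + mu * (Wp - Wq)| ≤
        |X u p.1 - X u q.1| + |Y u p.2 - Y u q.2| + |mu * (Wp - Wq)| :=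
      abs_add_three _ _ _
    have t2 : |mu * (Wp - Wq)| = mu * |Wp - Wq| := by
      rw [abs_mul, abs_of_pos hmu0]
    have t3 : mu * |Wp - Wq| ≤ mu * (K * ((1-1/mu) * (E1*d1) + (1+1/mu) * (E2*d2))) :=
      mul_le_mul_of_nonneg_left hw' hmu0.le
    rw [hdX, hdY] at t1
    rw [t2] at t1
    linarith
  have heq1 : Real.exp (-(l+mu)*u) * E1 = Real.exp (-(mu-1)*u) := by
    rw [hE1def, ← Real.exp_add]; ring_nf
  have heq2 : Real.exp (-(l+mu)*u) * E2 = Real.exp (-(mu+1)*u) := by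
    rw [hE2def, ← Real.exp_add]; ring_nf
  set F1 := Real.exp (-(mu-1)*u) with hF1
  set F2 := Real.exp (-(mu+1)*u) with hF2
  have hF1p : 0 < F1 := Real.exp_pos _
  have hF2p : 0 < F2 := Real.exp_pos _
  have step : |itg l mu c X Y w p u - itg l mu c X Y w q u| ≤
      F1 * d1 + F2 * d2 + mu * K * ((1-1/mu) * (F1*d1) + (1+1/mu) * (F2*d2)) := by
    rw [hdiff, abs_mul, abs_of_pos (Real.exp_pos _)]
    have h1 := mul_le_mul_of_nonneg_left hbr (Real.exp_pos (-(l+mu)*u)).le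
    calc Real.exp (-(l+mu)*u) *
        |(X u p.1 - X u q.1) + (Y u p.2 - Y u q.2) + mu * (Wp - Wq)|
        ≤ Real.exp (-(l+mu)*u) * (E1 * d1 + E2 * d2 +
            mu * (K * ((1-1/mu) * (E1*d1) + (1+1/mu) * (E2*d2)))) := h1
      _ = d1 * (Real.exp (-(l+mu)*u) * E1) + d2 * (Real.exp (-(l+mu)*u) * E2)
          + mu * K * ((1-1/mu) * ((Real.exp (-(l+mu)*u) * E1) * d1)
            + (1+1/mu) * ((Real.exp (-(l+mu)*u) * E2) * d2)) := by ring
      _ = F1 * d1 + F2 * d2 + mu * K * ((1-1/mu) * (F1*d1) + (1+1/mu) * (F2*d2)) := by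
          rw [heq1, heq2]; ring
  refine step.trans ?_
  have h1 : mu*K*((1-1/mu)*(F1*d1)) ≤ mu*K*(2*(F1*d1)) :=
    mul_le_mul_of_nonneg_left
      (mul_le_mul_of_nonneg_right him2 (mul_nonneg hF1p.le hd1nn)) hmuK
  have h2 : mu*K*((1+1/mu)*(F2*d2)) ≤ mu*K*(2*(F2*d2)) :=
    mul_le_mul_of_nonneg_left
      (mul_le_mul_of_nonneg_right hip2 (mul_nonneg hF2p.le hd2nn)) hmuK
  have h3 : F1*d1 + F2*d2 ≤ (d1+d2)*(F1+F2) := by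
    nlinarith [mul_nonneg hd1nn hF2p.le, mul_nonneg hd2nn hF1p.le]
  have h5 := mul_le_mul_of_nonneg_left h3 (by positivity : (0:ℝ) ≤ 2*(mu*K))
  nlinarith [h1, h2, h3, h5]

lemma lip_bound_cont : Continuous (fun u : ℝ =>
    Real.exp (-(mu-1)*u) + Real.exp (-(mu+1)*u)) := by fun_prop

lemma lip_int_Ioc_le {t : ℝ} (ht : 0 ≤ t) :
    ∫ u in (0:ℝ)..t, (Real.exp (-(mu-1)*u) + Real.exp (-(mu+1)*u)) ≤
      1/(mu-1) + 1/(mu+1) := by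
  have h1 : (0:ℝ) < mu - 1 := by linarith [S.hμ]
  have h2 : (0:ℝ) < mu + 1 := by linarith [S.hμ]
  have c1 : Continuous (fun u : ℝ => Real.exp (-(mu-1)*u)) := by fun_prop
  have c2 : Continuous (fun u : ℝ => Real.exp (-(mu+1)*u)) := by fun_prop
  rw [intervalIntegral.integral_add (c1.intervalIntegrable _ _) (c2.intervalIntegrable _ _)]
  exact add_le_add (exp_int_Ioc_le h1 ht) (exp_int_Ioc_le h2 ht)

lemma lip_int_Ioi : ∫ u in Ioi (0:ℝ),
    (Real.exp (-(mu-1)*u) + Real.exp (-(mu+1)*u)) = 1/(mu-1) + 1/(mu+1) := by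
  have h1 : (0:ℝ) < mu - 1 := by linarith [S.hμ]
  have h2 : (0:ℝ) < mu + 1 := by linarith [S.hμ]
  rw [MeasureTheory.integral_add (exp_neg_integrableOn_Ioi 0 h1)
    (exp_neg_integrableOn_Ioi 0 h2), exp_integral_Ioi h1, exp_integral_Ioi h2]

lemma Jop_lip {w : ℝ × ℝ → ℝ} (hw : Good c w) {K : ℝ} (hK0 : 0 ≤ K)
    (hK : ∀ p ∈ Q, ∀ q ∈ Q, |w p - w q| ≤ K * (|p.1 - q.1| + |p.2 - q.2|))
    {p q : ℝ × ℝ} (hp : p ∈ Q) (hq : q ∈ Q) {t : ℝ} (ht : 0 ≤ t) :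
    |Jop l mu c X Y w t p.1 p.2 - Jop l mu c X Y w t q.1 q.2| ≤
      ((1 + 2*mu*K) * (1/(mu-1) + 1/(mu+1))) * (|p.1 - q.1| + |p.2 - q.2|) := by
  have hCnn : 0 ≤ (1 + 2*mu*K) * (|p.1 - q.1| + |p.2 - q.2|) := by
    have : 0 ≤ mu * K := mul_nonneg (by linarith [S.hμ]) hK0
    have := abs_nonneg (p.1 - q.1)
    have := abs_nonneg (p.2 - q.2)
    nlinarith
  have hiip := S.itg_intervalIntegrable hw hp ht
  have hiiq := S.itg_intervalIntegrable hw hq ht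
  rw [Jop_eq, Jop_eq, ← intervalIntegral.integral_sub hiip hiiq]
  have h1 := intervalIntegral.abs_integral_le_integral_abs (μ := volume) (f := fun u =>
    itg l mu c X Y w p u - itg l mu c X Y w q u) ht
  refine h1.trans ?_
  have h2 : ∫ u in (0:ℝ)..t, |itg l mu c X Y w p u - itg l mu c X Y w q u| ≤
      ∫ u in (0:ℝ)..t, ((1 + 2*mu*K) * (|p.1 - q.1| + |p.2 - q.2|)) *
        (Real.exp (-(mu-1)*u) + Real.exp (-(mu+1)*u)) := by
    apply intervalIntegral.integral_mono_on ht ((hiip.sub hiiq).abs)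
      ((continuous_const.mul S.lip_bound_cont).intervalIntegrable _ _)
    intro u hu
    exact S.itg_lip hK0 hK hp hq u hu.1
  refine h2.trans ?_
  rw [intervalIntegral.integral_const_mul]
  calc ((1 + 2*mu*K) * (|p.1 - q.1| + |p.2 - q.2|)) *
      ∫ u in (0:ℝ)..t, (Real.exp (-(mu-1)*u) + Real.exp (-(mu+1)*u))
      ≤ ((1 + 2*mu*K) * (|p.1 - q.1| + |p.2 - q.2|)) * (1/(mu-1) + 1/(mu+1)) :=
        mul_le_mul_of_nonneg_left (S.lip_int_Ioc_le ht) hCnn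
    _ = ((1 + 2*mu*K) * (1/(mu-1) + 1/(mu+1))) * (|p.1 - q.1| + |p.2 - q.2|) := by ring

lemma Jinfty_lip {w : ℝ × ℝ → ℝ} (hw : Good c w) {K : ℝ} (hK0 : 0 ≤ K)
    (hK : ∀ p ∈ Q, ∀ q ∈ Q, |w p - w q| ≤ K * (|p.1 - q.1| + |p.2 - q.2|))
    {p q : ℝ × ℝ} (hp : p ∈ Q) (hq : q ∈ Q) :
    |Jinfty l mu c X Y w p.1 p.2 - Jinfty l mu c X Y w q.1 q.2| ≤
      ((1 + 2*mu*K) * (1/(mu-1) + 1/(mu+1))) * (|p.1 - q.1| + |p.2 - q.2|) := by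
  have hCnn : 0 ≤ (1 + 2*mu*K) * (|p.1 - q.1| + |p.2 - q.2|) := by
    have : 0 ≤ mu * K := mul_nonneg (by linarith [S.hμ]) hK0
    have := abs_nonneg (p.1 - q.1)
    have := abs_nonneg (p.2 - q.2)
    nlinarith
  have hip := S.itg_integrableOn hw hp
  have hiq := S.itg_integrableOn hw hq
  rw [Jinfty_eq, Jinfty_eq, ← MeasureTheory.integral_sub hip hiq]
  have h1 : |∫ u in Ioi (0:ℝ), (itg l mu c X Y w p u - itg l mu c X Y w q u)| ≤
      ∫ u in Ioi (0:ℝ), |itg l mu c X Y w p u - itg l mu c X Y w q u| := by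
    simpa [Real.norm_eq_abs] using
      MeasureTheory.norm_integral_le_integral_norm (μ := volume.restrict (Ioi 0))
        (fun u => itg l mu c X Y w p u - itg l mu c X Y w q u)
  refine h1.trans ?_
  have h2 : ∫ u in Ioi (0:ℝ), |itg l mu c X Y w p u - itg l mu c X Y w q u| ≤
      ∫ u in Ioi (0:ℝ), ((1 + 2*mu*K) * (|p.1 - q.1| + |p.2 - q.2|)) *
        (Real.exp (-(mu-1)*u) + Real.exp (-(mu+1)*u)) := by
    apply setIntegral_mono_on ((hip.sub hiq).abs)
      (((exp_neg_integrableOn_Ioi 0 (show (0:ℝ) < mu - 1 by linarith [S.hμ])).add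
        (exp_neg_integrableOn_Ioi 0 (show (0:ℝ) < mu + 1 by linarith [S.hμ]))).const_mul _)
      measurableSet_Ioi
    intro u hu
    exact S.itg_lip hK0 hK hp hq u (le_of_lt hu : (0:ℝ) ≤ u)
  refine h2.trans ?_
  rw [MeasureTheory.integral_const_mul, S.lip_int_Ioi]
  exact le_of_eq (by ring)

lemma Jzero_lip_one_side {w : ℝ × ℝ → ℝ} (hw : Good c w) {K : ℝ} (hK0 : 0 ≤ K)
    (hK : ∀ p ∈ Q, ∀ q ∈ Q, |w p - w q| ≤ K * (|p.1 - q.1| + |p.2 - q.2|))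
    {p q : ℝ × ℝ} (hp : p ∈ Q) (hq : q ∈ Q) :
    Jzero l mu c X Y w p.1 p.2 ≤ Jzero l mu c X Y w q.1 q.2 +
      ((1 + 2*mu*K) * (1/(mu-1) + 1/(mu+1))) * (|p.1 - q.1| + |p.2 - q.2|) := by
  set D := ((1 + 2*mu*K) * (1/(mu-1) + 1/(mu+1))) * (|p.1 - q.1| + |p.2 - q.2|) with hD
  have key : ∀ b ∈ Jset l mu c X Y w q, Jzero l mu c X Y w p.1 p.2 - D ≤ b := by
    intro b hb
    rcases Set.mem_insert_iff.mp hb with h | ⟨t, ht, hteq⟩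
    · subst h
      have h1 : Jzero l mu c X Y w p.1 p.2 ≤ Jinfty l mu c X Y w p.1 p.2 := by
        rw [Jzero_eq]
        exact csInf_le (S.Jset_bddBelow hw hp) (Set.mem_insert _ _)
      have h2 := abs_sub_le_iff.mp (S.Jinfty_lip hw hK0 hK hp hq)
      linarith [h2.1]
    · subst hteq
      simp only
      have h1 : Jzero l mu c X Y w p.1 p.2 ≤ Jop l mu c X Y w t p.1 p.2 := by
        rw [Jzero_eq]
        exact csInf_le (S.Jset_bddBelow hw hp)
          (Set.mem_insert_iff.mpr (Or.inr ⟨t, ht, rfl⟩))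
      have h2 := abs_sub_le_iff.mp (S.Jop_lip hw hK0 hK hp hq ht)
      linarith [h2.1]
  have h3 : Jzero l mu c X Y w p.1 p.2 - D ≤ Jzero l mu c X Y w q.1 q.2 := by
    rw [Jzero_eq l mu c X Y w q]
    exact le_csInf (Jset_nonempty _ _ _ _ _ _ _) key
  linarith

lemma Jzero_lip {w : ℝ × ℝ → ℝ} (hw : Good c w) {K : ℝ} (hK0 : 0 ≤ K)
    (hK : ∀ p ∈ Q, ∀ q ∈ Q, |w p - w q| ≤ K * (|p.1 - q.1| + |p.2 - q.2|))
    {p q : ℝ × ℝ} (hp : p ∈ Q) (hq : q ∈ Q) :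
    |Jzero l mu c X Y w p.1 p.2 - Jzero l mu c X Y w q.1 q.2| ≤
      ((1 + 2*mu*K) * (1/(mu-1) + 1/(mu+1))) * (|p.1 - q.1| + |p.2 - q.2|) := by
  have h1 := S.Jzero_lip_one_side hw hK0 hK hp hq
  have h2 := S.Jzero_lip_one_side hw hK0 hK hq hp
  rw [abs_sub_comm q.1 p.1, abs_sub_comm q.2 p.2] at h2
  exact abs_sub_le_iff.mpr ⟨by linarith, by linarith⟩

lemma good_step {w : ℝ × ℝ → ℝ} (hw : Good c w) :
    Good c (fun p => Jzero l mu c X Y w p.1 p.2) := by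
  obtain ⟨K, hK0, hK⟩ := hw.2.2
  have hK'0 : 0 ≤ (1 + 2*mu*K) * (1/(mu-1) + 1/(mu+1)) := by
    have h1 : (0:ℝ) < mu - 1 := by linarith [S.hμ]
    have h2 : (0:ℝ) < mu + 1 := by linarith [S.hμ]
    have : 0 ≤ mu * K := mul_nonneg (by linarith [S.hμ]) hK0
    have h3 : 0 ≤ 1/(mu-1) + 1/(mu+1) := by positivity
    nlinarith
  exact ⟨fun p hp => ⟨S.Jzero_lb hw hp, S.Jzero_nonpos hw hp⟩, S.Jzero_concave hw,
    (1 + 2*mu*K) * (1/(mu-1) + 1/(mu+1)), hK'0,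
    fun p hp q hq => S.Jzero_lip hw hK0 hK hp hq⟩

end
end Setup

lemma good_zero {c : ℝ} (hc : 0 < c) : Good c (fun _ : ℝ × ℝ => 0) := by
  refine ⟨fun p _ => ⟨?_, le_refl 0⟩, concaveOn_const _ convexQ, 0, le_refl 0, ?_⟩
  · have : 0 ≤ Real.sqrt 2 / c := by positivity
    linarith
  · intro p _ q _
    simp

namespace Setup
section
variable {l mu c m : ℝ} {X Y : ℝ → ℝ → ℝ} (S : Setup l mu c m X Y)
include S

lemma good_vseq (n : ℕ) : Good c (vseq l mu c X Y n) := by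
  induction n with
  | zero => exact good_zero S.hc
  | succ n ih =>
      show Good c (fun p => Jzero l mu c X Y (vseq l mu c X Y n) p.1 p.2)
      exact S.good_step ih

lemma vseq_dec (n : ℕ) : ∀ p ∈ Q, vseq l mu c X Y (n+1) p ≤ vseq l mu c X Y n p := by
  induction n with
  | zero =>
      intro p hp
      exact S.Jzero_nonpos (good_zero S.hc) hp
  | succ n ih =>
      intro p hp
      show Jzero l mu c X Y (vseq l mu c X Y (n+1)) p.1 p.2 ≤
        Jzero l mu c X Y (vseq l mu c X Y n) p.1 p.2
      exact S.Jzero_mono (S.good_vseq (n+1)) (S.good_vseq n) ih hp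

lemma vseq_lb (n : ℕ) {p : ℝ × ℝ} (hp : p ∈ Q) :
    -(Real.sqrt 2/c) ≤ vseq l mu c X Y n p := by
  cases n with
  | zero =>
      show -(Real.sqrt 2/c) ≤ 0
      have : 0 ≤ Real.sqrt 2 / c := by
        have := S.hc
        positivity
      linarith
  | succ n => exact S.Jzero_lb (S.good_vseq n) hp

end
end Setup

end S7

/-- the sequence `(v_n)` is decreasing, bounded between `-√2/c`
and `0` on `ℝ₊²`, each `v_n` is bounded and concave, and the pointwise limit
`v = lim v_n` exists and is bounded and concave. -/
theorem stmt7 (l μ c m : ℝ) (hl : 0 < l) (hc : 0 < c) (hμ : 1 < μ)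
    (hm1 : -1 < m) (hm2 : m < 1)
    (X Y : ℝ → ℝ → ℝ)
    (hX0 : ∀ φ, X 0 φ = φ)
    (hX : ∀ φ t, HasDerivAt (fun s => X s φ)
      ((l + 1) * X t φ + l * (1 - m) / Real.sqrt 2) t)
    (hY0 : ∀ φ, Y 0 φ = φ)
    (hY : ∀ φ t, HasDerivAt (fun s => Y s φ)
      ((l - 1) * Y t φ + l * (1 + m) / Real.sqrt 2) t) :
    (∀ n : ℕ, ∀ p : ℝ × ℝ, 0 ≤ p.1 → 0 ≤ p.2 →
        -(Real.sqrt 2) / c ≤ vseq l μ c X Y (n + 1) p ∧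
        vseq l μ c X Y (n + 1) p ≤ vseq l μ c X Y n p ∧
        vseq l μ c X Y n p ≤ 0) ∧
    (∀ n : ℕ, ConcaveOn ℝ {p : ℝ × ℝ | 0 ≤ p.1 ∧ 0 ≤ p.2} (vseq l μ c X Y n) ∧
        ∃ M, ∀ p ∈ {p : ℝ × ℝ | 0 ≤ p.1 ∧ 0 ≤ p.2}, |vseq l μ c X Y n p| ≤ M) ∧
    (∃ v : ℝ × ℝ → ℝ,
        (∀ p ∈ {p : ℝ × ℝ | 0 ≤ p.1 ∧ 0 ≤ p.2},
          Filter.Tendsto (fun n => vseq l μ c X Y n p) Filter.atTop (nhds (v p))) ∧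
        ConcaveOn ℝ {p : ℝ × ℝ | 0 ≤ p.1 ∧ 0 ≤ p.2} v ∧
        ∃ M, ∀ p ∈ {p : ℝ × ℝ | 0 ≤ p.1 ∧ 0 ≤ p.2}, |v p| ≤ M) := by
  have S : S7.Setup l μ c m X Y := ⟨hl, hc, hμ, hm1, hm2, hX0, hX, hY0, hY⟩
  have hQ : {p : ℝ × ℝ | 0 ≤ p.1 ∧ 0 ≤ p.2} = S7.Q := rfl
  have hB : 0 ≤ Real.sqrt 2 / c := by positivity
  have hbdd : ∀ q ∈ S7.Q, BddBelow (Set.range (fun n => vseq l μ c X Y n q)) := by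
    intro q hq
    refine ⟨-(Real.sqrt 2/c), ?_⟩
    rintro x ⟨n, rfl⟩
    exact S.vseq_lb n hq
  refine ⟨?_, ?_, ?_⟩
  · intro n p h1 h2
    have hp : p ∈ S7.Q := ⟨h1, h2⟩
    refine ⟨?_, S.vseq_dec n p hp, ((S.good_vseq n).1 p hp).2⟩
    rw [neg_div]
    exact S.vseq_lb (n+1) hp
  · intro n
    refine ⟨?_, Real.sqrt 2 / c, ?_⟩
    · rw [hQ]
      exact (S.good_vseq n).2.1
    · intro p hp
      rw [hQ] at hp
      have h1 := (S.good_vseq n).1 p hp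
      rw [abs_le]
      exact ⟨by linarith [h1.1], by linarith [h1.2]⟩
  · refine ⟨fun p => ⨅ n, vseq l μ c X Y n p, ?_, ?_, Real.sqrt 2 / c, ?_⟩
    · intro p hp
      rw [hQ] at hp
      exact tendsto_atTop_ciInf
        (antitone_nat_of_succ_le (fun n => S.vseq_dec n p hp)) (hbdd p hp)
    · rw [hQ]
      refine ⟨S7.convexQ, ?_⟩
      intro x hx y hy a b ha hb hab
      simp only [smul_eq_mul]
      apply le_ciInf
      intro n
      have hcon := (S.good_vseq n).2.1.2 hx hy ha hb hab
      simp only [smul_eq_mul] at hcon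
      have h1 : (⨅ k, vseq l μ c X Y k x) ≤ vseq l μ c X Y n x := ciInf_le (hbdd x hx) n
      have h2 : (⨅ k, vseq l μ c X Y k y) ≤ vseq l μ c X Y n y := ciInf_le (hbdd y hy) n
      have h3 := mul_le_mul_of_nonneg_left h1 ha
      have h4 := mul_le_mul_of_nonneg_left h2 hb
      linarith [hcon]
    · intro p hp
      rw [hQ] at hp
      have hub : (⨅ n, vseq l μ c X Y n p) ≤ 0 := ciInf_le (hbdd p hp) 0
      have hlb : -(Real.sqrt 2/c) ≤ ⨅ n, vseq l μ c X Y n p :=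
        le_ciInf (fun n => S.vseq_lb n hp)
      rw [abs_le]
      exact ⟨by linarith, by linarith⟩
end

section
/- Define G₀(t,φ₀,φ₁) = x(t,φ₀) + y(t,φ₁) - (λ/c)√2 where x, y are the flows of the model's linear ODEs. For each fixed (φ₀,φ₁) ∈ ℝ₊², the function t ↦ G₀(t,φ₀,φ₁) on ℝ₊ has at most one local minimum; it is strictly increasing if it has no local minimum, and otherwise it is strictly decreasing before and strictly increasing after the minimum. -/
/-- Auxiliary: if `f' = α f + β` with `β > 0` and `f 0 ≥ 0`, then `f ≥ 0` on `ℝ₊`. -/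
lemma aux_inv (α β : ℝ) (hβ : 0 < β) (f : ℝ → ℝ)
    (hf : ∀ t, HasDerivAt f (α * f t + β) t) (h0 : 0 ≤ f 0) :
    ∀ t, 0 ≤ t → 0 ≤ f t := by
  intro t ht
  set g : ℝ → ℝ := fun s => f s * Real.exp (-α * s) with hgdef
  have hg : ∀ s, HasDerivAt g (β * Real.exp (-α * s)) s := by
    intro s
    have he : HasDerivAt (fun s : ℝ => Real.exp (-α * s)) (Real.exp (-α * s) * (-α * 1)) s :=
      ((hasDerivAt_id s).const_mul (-α)).exp
    have : HasDerivAt (fun y => f y * Real.exp (-α * y))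
        ((α * f s + β) * Real.exp (-α * s) + f s * (Real.exp (-α * s) * (-α * 1))) s := (hf s).mul he
    convert this using 1
    ring
  have hmono : Monotone g :=
    monotone_of_deriv_nonneg (fun s => (hg s).differentiableAt)
      (fun s => by rw [(hg s).deriv]; positivity)
  have h1 : g 0 ≤ g t := hmono ht
  have h2 : g 0 = f 0 := by simp [hgdef]
  have h3 : 0 < Real.exp (-α * t) := Real.exp_pos _
  have h4 : g t = f t * Real.exp (-α * t) := rfl
  nlinarith [h1, h2, h0, h3, h4]

/-- for each fixed `(φ₀,φ₁) ∈ ℝ₊²`, the function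
`t ↦ G₀(t,φ₀,φ₁) = x(t,φ₀) + y(t,φ₁) - (λ/c)√2` on `ℝ₊` has at most one local
minimum: either it is strictly increasing on `ℝ₊`, or there is a time `t⋆ ≥ 0`
such that it is strictly decreasing on `[0,t⋆]` and strictly increasing on
`[t⋆,∞)`. -/
theorem stmt17 (l c m : ℝ) (hl : 0 < l) (hc : 0 < c) (hm1 : -1 < m) (hm2 : m < 1)
    (X Y : ℝ → ℝ → ℝ)
    (hX0 : ∀ φ, X 0 φ = φ)
    (hX : ∀ φ t, HasDerivAt (fun s => X s φ)
      ((l + 1) * X t φ + l * (1 - m) / Real.sqrt 2) t)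
    (hY0 : ∀ φ, Y 0 φ = φ)
    (hY : ∀ φ t, HasDerivAt (fun s => Y s φ)
      ((l - 1) * Y t φ + l * (1 + m) / Real.sqrt 2) t) :
    ∀ φ0 φ1 : ℝ, 0 ≤ φ0 → 0 ≤ φ1 →
      StrictMonoOn (fun t => X t φ0 + Y t φ1 - (l / c) * Real.sqrt 2)
          (Set.Ici (0:ℝ)) ∨
      ∃ tstar : ℝ, 0 ≤ tstar ∧
        StrictAntiOn (fun t => X t φ0 + Y t φ1 - (l / c) * Real.sqrt 2)
          (Set.Icc 0 tstar) ∧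
        StrictMonoOn (fun t => X t φ0 + Y t φ1 - (l / c) * Real.sqrt 2)
          (Set.Ici tstar) := by
  intro φ0 φ1 hφ0 hφ1
  have hs2 : (0:ℝ) < Real.sqrt 2 := Real.sqrt_pos.mpr (by norm_num)
  set a : ℝ := l * (1 - m) / Real.sqrt 2 with hadef
  set b : ℝ := l * (1 + m) / Real.sqrt 2 with hbdef
  have ha : 0 < a := by
    apply div_pos _ hs2; nlinarith
  have hb : 0 < b := by
    apply div_pos _ hs2; nlinarith
  -- nonnegativity of X and Y on ℝ₊
  have hXpos : ∀ t, 0 ≤ t → 0 ≤ X t φ0 := by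
    apply aux_inv (l + 1) a ha
    · intro t; exact hX φ0 t
    · rw [hX0]; exact hφ0
  have hYpos : ∀ t, 0 ≤ t → 0 ≤ Y t φ1 := by
    apply aux_inv (l - 1) b hb
    · intro t; exact hY φ1 t
    · rw [hY0]; exact hφ1
  -- G and its derivative D
  set G : ℝ → ℝ := fun t => X t φ0 + Y t φ1 - (l / c) * Real.sqrt 2 with hGdef
  set D : ℝ → ℝ := fun t => ((l + 1) * X t φ0 + a) + ((l - 1) * Y t φ1 + b) with hDdef
  have hG : ∀ t, HasDerivAt G (D t) t := fun t =>
    ((hX φ0 t).add (hY φ1 t)).sub_const _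
  set D' : ℝ → ℝ := fun t =>
    (l + 1) * ((l + 1) * X t φ0 + a) + (l - 1) * ((l - 1) * Y t φ1 + b) with hD'def
  have hD : ∀ t, HasDerivAt D (D' t) t := by
    intro t
    have h := (((hX φ0 t).const_mul (l + 1)).add ((hY φ1 t).const_mul (l - 1))).add_const (a + b)
    have hfun : D = fun x => ((l + 1) * X x φ0 + (l - 1) * Y x φ1) + (a + b) := by
      funext x; simp only [hDdef]; ring
    rw [hfun]; exact h
  -- the exponential tilt
  set k : ℝ := min (l - 1) 0 with hkdef
  have hk : k ≤ 0 := min_le_right _ _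
  have hbound : ∀ t, 0 ≤ t → 2 * a ≤ D' t - k * D t := by
    intro t ht
    have hx := hXpos t ht
    have hy := hYpos t ht
    rcases le_or_gt 1 l with h1 | h1
    · have hk0 : k = 0 := min_eq_right (by linarith)
      rw [hk0]
      simp only [hDdef, hD'def, zero_mul, sub_zero]
      nlinarith [mul_nonneg (mul_nonneg (by linarith : (0:ℝ) ≤ l + 1) (by linarith : (0:ℝ) ≤ l + 1)) hx,
        mul_nonneg (mul_nonneg (by linarith : (0:ℝ) ≤ l - 1) (by linarith : (0:ℝ) ≤ l - 1)) hy,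
        mul_nonneg (by linarith : (0:ℝ) ≤ l - 1) hb.le,
        mul_nonneg (by linarith : (0:ℝ) ≤ l - 1) ha.le]
    · have hk0 : k = l - 1 := min_eq_left (by linarith)
      rw [hk0]
      simp only [hDdef, hD'def]
      nlinarith [mul_nonneg (by linarith : (0:ℝ) ≤ l + 1) hx]
  set F : ℝ → ℝ := fun t => D t * Real.exp (-k * t) with hFdef
  have hF : ∀ t, HasDerivAt F ((D' t - k * D t) * Real.exp (-k * t)) t := by
    intro t
    have he : HasDerivAt (fun s : ℝ => Real.exp (-k * s)) (Real.exp (-k * t) * (-k * 1)) t :=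
      ((hasDerivAt_id t).const_mul (-k)).exp
    have : HasDerivAt (fun y => D y * Real.exp (-k * y))
        (D' t * Real.exp (-k * t) + D t * (Real.exp (-k * t) * (-k * 1))) t := (hD t).mul he
    convert this using 1
    ring
  have hFpos : ∀ t, 0 ≤ t → 2 * a ≤ (D' t - k * D t) * Real.exp (-k * t) := by
    intro t ht
    have h1 : (1:ℝ) ≤ Real.exp (-k * t) := Real.one_le_exp (by nlinarith)
    nlinarith [hbound t ht]
  -- F is strictly increasing on ℝ₊
  have hFmono : StrictMonoOn F (Set.Ici (0:ℝ)) := by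
    apply strictMonoOn_of_deriv_pos (convex_Ici 0)
      (fun t _ => (hF t).continuousAt.continuousWithinAt)
    intro t ht
    rw [interior_Ici] at ht
    rw [(hF t).deriv]
    have := hFpos t (le_of_lt ht)
    linarith
  -- F grows at least linearly
  have hFgrow : ∀ t, 0 ≤ t → F 0 + 2 * a * t ≤ F t := by
    intro t ht
    set H : ℝ → ℝ := fun s => F s - 2 * a * s with hHdef
    have hH : ∀ s, HasDerivAt H ((D' s - k * D s) * Real.exp (-k * s) - 2 * a) s := by
      intro s
      have h : HasDerivAt (fun y => F y - 2 * a * y)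
          ((D' s - k * D s) * Real.exp (-k * s) - 2 * a * 1) s :=
        (hF s).sub ((hasDerivAt_id' s).const_mul (2 * a))
      convert h using 1
      ring
    have hHmono : MonotoneOn H (Set.Ici (0:ℝ)) := by
      apply monotoneOn_of_deriv_nonneg (convex_Ici 0)
        (fun s _ => (hH s).continuousAt.continuousWithinAt)
        (fun s hs => (hH s).differentiableAt.differentiableWithinAt)
      intro s hs
      rw [interior_Ici] at hs
      rw [(hH s).deriv]
      linarith [hFpos s (le_of_lt hs)]
    have := hHmono (Set.self_mem_Ici) (Set.mem_Ici.mpr ht) ht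
    simp only [hHdef] at this
    linarith
  have hF0 : F 0 = D 0 := by simp [hFdef]
  have hexp : ∀ t : ℝ, 0 < Real.exp (-k * t) := fun t => Real.exp_pos _
  -- sign transfer
  have hDofF : ∀ t, 0 < F t → 0 < D t := by
    intro t hFt
    by_contra h
    push_neg at h
    have h4 : F t = D t * Real.exp (-k * t) := rfl
    nlinarith [hexp t, hFt, h4]
  have hDofF' : ∀ t, F t < 0 → D t < 0 := by
    intro t hFt
    by_contra h
    push_neg at h
    have h4 : F t = D t * Real.exp (-k * t) := rfl
    nlinarith [hexp t, hFt, h4]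
  rcases le_or_gt 0 (D 0) with h0 | h0
  · -- G strictly increasing on ℝ₊
    left
    apply strictMonoOn_of_deriv_pos (convex_Ici 0)
      (fun t _ => (hG t).continuousAt.continuousWithinAt)
    intro t ht
    rw [interior_Ici] at ht
    rw [(hG t).deriv]
    apply hDofF
    have := hFmono Set.self_mem_Ici (Set.mem_Ici.mpr ht.le) ht
    rw [hF0] at this
    linarith
  · -- find the crossing time
    right
    set t2 : ℝ := (1 - F 0) / (2 * a) with ht2def
    have hF0neg : F 0 < 0 := by rw [hF0]; exact h0
    have ht2 : 0 < t2 := by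
      apply div_pos _ (by linarith)
      linarith
    have hFt2 : 0 < F t2 := by
      have h1 := hFgrow t2 ht2.le
      have h2 : 2 * a * t2 = 1 - F 0 := by
        rw [ht2def]; field_simp
      nlinarith
    have hcont : ContinuousOn F (Set.Icc 0 t2) :=
      fun s _ => (hF s).continuousAt.continuousWithinAt
    have hmem : (0:ℝ) ∈ Set.Icc (F 0) (F t2) := ⟨hF0neg.le, hFt2.le⟩
    obtain ⟨tstar, htstar, hFtstar⟩ := intermediate_value_Icc ht2.le hcont hmem
    refine ⟨tstar, htstar.1, ?_, ?_⟩
    · -- strictly decreasing on [0, tstar]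
      apply strictAntiOn_of_deriv_neg (convex_Icc 0 tstar)
        (fun t _ => (hG t).continuousAt.continuousWithinAt)
      intro t ht
      rw [interior_Icc] at ht
      rw [(hG t).deriv]
      apply hDofF'
      have := hFmono (Set.mem_Ici.mpr ht.1.le) (Set.mem_Ici.mpr (ht.1.le.trans ht.2.le)) ht.2
      rw [hFtstar] at this
      linarith
    · -- strictly increasing on [tstar, ∞)
      apply strictMonoOn_of_deriv_pos (convex_Ici tstar)
        (fun t _ => (hG t).continuousAt.continuousWithinAt)
      intro t ht
      rw [interior_Ici] at ht
      rw [(hG t).deriv]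
      apply hDofF
      have := hFmono (Set.mem_Ici.mpr htstar.1) (Set.mem_Ici.mpr (htstar.1.trans ht.le)) ht
      rw [hFtstar] at this
      linarith
end
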